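/- arXiv:2312.13825 — 7 statements merged into one kernel-verified Lean document; each statement's English description precedes it below -/
import Mathlib

section
/- Let V be the vertex set of a graph G, let k be a natural number, and let ((A_i, B_i))_{i ∈ I} be a nonempty chain (with respect to the order (A,B) ≤ (C,D) iff A ⊆ C and D ⊆ B) of separations of G, each of order at most k. Let A = ⋃_{i∈I} A_i and B = ⋂_{i∈I} B_i. Then (A, B) is a separation of G of order at most k. -/
/-- `(A, B)` is a separation of the graph `G`: the two sides cover all vertices and
every edge with one endpoint in `A` and one in `B` has an endpoint in `A ∩ B`. -/
def IsGraphSeparation {V : Type*} (G : SimpleGraph V) (A B : Set V) : Prop :=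
  A ∪ B = Set.univ ∧
  ∀ x y : V, G.Adj x y → x ∈ A → y ∈ B → x ∈ A ∩ B ∨ y ∈ A ∩ B

/-- The supremum of a nonempty chain of separations of a graph, each of order at most `k`,
is again a separation of order at most `k`. -/
theorem stmt3 {V : Type*} (G : SimpleGraph V) (k : ℕ) {ι : Type*} [Nonempty ι]
    (A B : ι → Set V)
    (hsep : ∀ i, IsGraphSeparation G (A i) (B i))
    (horder : ∀ i, (A i ∩ B i).Finite ∧ (A i ∩ B i).ncard ≤ k)
    (hchain : ∀ i j, (A i ⊆ A j ∧ B j ⊆ B i) ∨ (A j ⊆ A i ∧ B i ⊆ B j)) :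
    IsGraphSeparation G (⋃ i, A i) (⋂ i, B i) ∧
      ((⋃ i, A i) ∩ ⋂ i, B i).Finite ∧ ((⋃ i, A i) ∩ ⋂ i, B i).ncard ≤ k := by
  classical
  -- the candidate separator
  set S : Set V := (⋃ i, A i) ∩ ⋂ i, B i with hS
  -- the separator is contained in one of the `A j ∩ B j`
  have hCsub : ∀ i, A i ∩ ⋂ j, B j ⊆ A i ∩ B i := fun i =>
    Set.inter_subset_inter_right _ (Set.iInter_subset _ i)
  have hCfin : ∀ i, (A i ∩ ⋂ j, B j).Finite := fun i => ((horder i).1).subset (hCsub i)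
  have hCk : ∀ i, (A i ∩ ⋂ j, B j).ncard ≤ k := fun i =>
    le_trans (Set.ncard_le_ncard (hCsub i) (horder i).1) (horder i).2
  -- choose a maximizer
  set T : Set ℕ := {n | ∃ i, (A i ∩ ⋂ j, B j).ncard = n} with hT
  have hTne : T.Nonempty := ⟨_, Classical.arbitrary ι, rfl⟩
  have hTbdd : BddAbove T := ⟨k, fun n ⟨i, hi⟩ => hi ▸ hCk i⟩
  obtain ⟨j, hj⟩ : sSup T ∈ T := Nat.sSup_mem hTne hTbdd
  have hmax : ∀ m ∈ T, m ≤ sSup T := fun m hm => le_csSup hTbdd hm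
  have hSsub : S ⊆ A j ∩ B j := by
    intro x hx
    obtain ⟨hx1, hx2⟩ := hx
    obtain ⟨i, hxi⟩ := Set.mem_iUnion.1 hx1
    have hxC : x ∈ A i ∩ ⋂ j, B j := ⟨hxi, hx2⟩
    rcases hchain i j with ⟨h1, _⟩ | ⟨h1, h2⟩
    · exact hCsub j ⟨h1 hxi, hx2⟩
    · -- A j ⊆ A i, so C j ⊆ C i, and by maximality ncards force C i = C j
      have hsub : A j ∩ ⋂ l, B l ⊆ A i ∩ ⋂ l, B l :=
        Set.inter_subset_inter_left _ h1
      have hle : (A i ∩ ⋂ l, B l).ncard ≤ (A j ∩ ⋂ l, B l).ncard := by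
        rw [hj]; exact hmax _ ⟨i, rfl⟩
      have heq : A j ∩ ⋂ l, B l = A i ∩ ⋂ l, B l :=
        Set.eq_of_subset_of_ncard_le hsub hle (hCfin i)
      exact hCsub j (heq ▸ hxC)
  refine ⟨⟨?_, ?_⟩, (horder j).1.subset hSsub, ?_⟩
  · -- covering
    ext x
    simp only [Set.mem_union, Set.mem_iUnion, Set.mem_iInter, Set.mem_univ, iff_true]
    by_cases h : ∃ i, x ∈ A i
    · exact Or.inl h
    · push_neg at h
      refine Or.inr fun i => ?_
      have := (hsep i).1
      have hx : x ∈ A i ∪ B i := this ▸ Set.mem_univ x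
      exact hx.resolve_left (h i)
  · -- edge condition
    intro x y hxy hx hy
    by_cases hyA : ∃ i, y ∈ A i
    · exact Or.inr ⟨Set.mem_iUnion.2 hyA, hy⟩
    · push_neg at hyA
      left
      refine ⟨hx, Set.mem_iInter.2 fun i => ?_⟩
      obtain ⟨l, hxl⟩ := Set.mem_iUnion.1 hx
      have key : ∀ m, x ∈ A m → x ∈ B m := by
        intro m hxm
        have := (hsep m).2 x y hxy hxm (Set.mem_iInter.1 hy m)
        rcases this with ⟨_, h⟩ | ⟨h, _⟩
        · exact h
        · exact absurd h (hyA m)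
      by_cases hxi : x ∈ A i
      · exact key i hxi
      · rcases hchain i l with ⟨_, h2⟩ | ⟨h1, _⟩
        · exact h2 (key l hxl)
        · exact absurd (h1 hxl) hxi
  · exact le_trans (Set.ncard_le_ncard hSsub (horder j).1) (horder j).2
end

section
/- Let Z be a cyclic order on a set S, T a cyclic order on a set S', and f : S → S' a map such that for every interval I of T, the preimage f^{-1}(I) is an interval of Z. Then f is monotone with respect to Z and T, or f is monotone with respect to Z and the mirror of T. -/
def IsCyclicOrder {S : Type*} (Z : Set (S × S × S)) : Prop :=
  (∀ a b c : S, (a, b, c) ∈ Z → (b, c, a) ∈ Z) ∧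
  (∀ a b c : S, (a, b, c) ∈ Z → (c, b, a) ∉ Z) ∧
  (∀ a b c : S, a ≠ b → b ≠ c → a ≠ c → (a, b, c) ∉ Z → (c, b, a) ∈ Z) ∧
  (∀ a b c d : S, (a, b, c) ∈ Z → (a, c, d) ∈ Z → (a, b, d) ∈ Z)

/-- The closed interval `[s,t]` of a cyclic order. -/
def cycInterval {S : Type*} (Z : Set (S × S × S)) (s t : S) : Set S :=
  {s, t} ∪ {c | (s, c, t) ∈ Z}

/-- The open interval `]s,t[` of a cyclic order. -/
def cycOpen {S : Type*} (Z : Set (S × S × S)) (s t : S) : Set S :=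
  {c | (s, c, t) ∈ Z}

/-- A subset `I` is an interval of the cyclic order `Z`. -/
def IsInterval {S : Type*} (Z : Set (S × S × S)) (I : Set S) : Prop :=
  ∀ s ∈ I, ∀ t ∈ I, cycInterval Z s t ⊆ I ∨ cycInterval Z t s ⊆ I

/-- The cyclic order induced on a subset `A`. -/
def inducedCycOrder {S : Type*} (Z : Set (S × S × S)) (A : Set S) : Set (S × S × S) :=
  {p | p ∈ Z ∧ p.1 ∈ A ∧ p.2.1 ∈ A ∧ p.2.2 ∈ A}

/-- `T` (a cyclic order on the whole type `R`) is a cycle completion of the cyclic order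
it induces on the subset `S`: every non-trivial interval of the induced order on `S` is
uniquely of the form `[v,w]_T ∩ S` with `v, w ∉ S`. -/
def IsCycleCompletion {R : Type*} (T : Set (R × R × R)) (S : Set R) : Prop :=
  IsCyclicOrder T ∧
  ∀ I : Set R, I ⊆ S → IsInterval (inducedCycOrder T S) I → I.Nonempty → I ≠ S →
    ∃! vw : R × R, vw.1 ∉ S ∧ vw.2 ∉ S ∧ cycInterval T vw.1 vw.2 ∩ S = I

/-- A map between cyclically ordered sets is monotone. -/
def CycMonotone {S S' : Type*} (Z : Set (S × S × S)) (Z' : Set (S' × S' × S'))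
    (f : S → S') : Prop :=
  ∀ a b c : S, (f a, f b, f c) ∈ Z' → (a, b, c) ∈ Z

/-- The mirror of a cyclic order. -/
def mirrorCyc {S : Type*} (Z : Set (S × S × S)) : Set (S × S × S) :=
  {p | (p.2.2, p.2.1, p.1) ∈ Z}


namespace CycAux

variable {S : Type*} {W : Set (S × S × S)}

lemma rot (hW : IsCyclicOrder W) {a b c : S} (h : (a,b,c) ∈ W) : (b,c,a) ∈ W := hW.1 a b c h

lemma asym (hW : IsCyclicOrder W) {a b c : S} (h : (a,b,c) ∈ W) : (c,b,a) ∉ W := hW.2.1 a b c h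

lemma total (hW : IsCyclicOrder W) {a b c : S} (h1 : a ≠ b) (h2 : b ≠ c) (h3 : a ≠ c)
    (h : (a,b,c) ∉ W) : (c,b,a) ∈ W := hW.2.2.1 a b c h1 h2 h3 h

lemma tr (hW : IsCyclicOrder W) {a b c d : S} (h1 : (a,b,c) ∈ W) (h2 : (a,c,d) ∈ W) :
    (a,b,d) ∈ W := hW.2.2.2 a b c d h1 h2

lemma allNe (hW : IsCyclicOrder W) {a b c : S} (h : (a,b,c) ∈ W) : a ≠ b ∧ b ≠ c ∧ a ≠ c := by
  refine ⟨?_, ?_, ?_⟩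
  · rintro rfl; exact asym hW (rot hW h) (rot hW h)
  · rintro rfl; exact asym hW (rot hW (rot hW h)) (rot hW (rot hW h))
  · rintro rfl; exact asym hW h h

lemma lemD (hW : IsCyclicOrder W) {a b c d : S} (h1 : (a,b,c) ∈ W) (h2 : (b,d,c) ∈ W) :
    (a,d,c) ∈ W :=
  rot hW (tr hW (rot hW (rot hW h1)) (rot hW (rot hW h2)))

lemma lemD2 (hW : IsCyclicOrder W) {a b c d : S} (h1 : (d,b,a) ∈ W) (h2 : (b,c,a) ∈ W) :
    (d,b,c) ∈ W :=
  rot hW (rot hW (tr hW h2 (rot hW h1)))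

lemma split (hW : IsCyclicOrder W) {a b c : S} (h : (a,b,c) ∈ W) (d : S)
    (h1 : d ≠ a) (h2 : d ≠ b) (h3 : d ≠ c) :
    (a,d,b) ∈ W ∨ (b,d,c) ∈ W ∨ (c,d,a) ∈ W := by
  by_cases k1 : (a,d,b) ∈ W
  · exact Or.inl k1
  by_cases k2 : (b,d,c) ∈ W
  · exact Or.inr (Or.inl k2)
  have hab := (allNe hW h).1
  have hbc := (allNe hW h).2.1
  have hac := (allNe hW h).2.2
  have hbda : (b,d,a) ∈ W := total hW h1.symm h2 hab k1
  have hcdb : (c,d,b) ∈ W := total hW h2.symm h3 hbc k2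
  refine Or.inr (Or.inr ?_)
  by_contra k3
  have hadc : (a,d,c) ∈ W := total hW h3.symm h1 hac.symm k3
  -- derive contradiction
  have hdbc : (d,b,c) ∈ W := rot hW hcdb
  have hdca : (d,c,a) ∈ W := rot hW hadc
  have hdba : (d,b,a) ∈ W := tr hW hdbc hdca
  exact asym hW (rot hW (rot hW hbda)) hdba

lemma mem_cycInterval {s t w : S} :
    w ∈ cycInterval W s t ↔ w = s ∨ w = t ∨ (s,w,t) ∈ W := by
  simp [cycInterval, Set.mem_insert_iff, or_assoc]

lemma claim1 (hW : IsCyclicOrder W) {s t v : S} (hv : v ∈ cycInterval W s t) :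
    cycInterval W s v ⊆ cycInterval W s t := by
  intro w hw
  rcases mem_cycInterval.1 hw with rfl | rfl | hw'
  · exact mem_cycInterval.2 (Or.inl rfl)
  · exact hv
  · rcases mem_cycInterval.1 hv with rfl | rfl | hv'
    · exact absurd hw' (asym hW hw')
    · exact mem_cycInterval.2 (Or.inr (Or.inr hw'))
    · exact mem_cycInterval.2 (Or.inr (Or.inr (tr hW hw' hv')))

lemma claim2 (hW : IsCyclicOrder W) {s t v : S} (hv : v ∈ cycInterval W s t) :
    cycInterval W v t ⊆ cycInterval W s t := by
  rcases mem_cycInterval.1 hv with rfl | rfl | hv'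
  · exact fun w hw => hw
  · intro w hw
    rcases mem_cycInterval.1 hw with rfl | rfl | hw'
    · exact mem_cycInterval.2 (Or.inr (Or.inl rfl))
    · exact mem_cycInterval.2 (Or.inr (Or.inl rfl))
    · exact absurd hw' (asym hW hw')
  · intro w hw
    rcases mem_cycInterval.1 hw with rfl | rfl | hw'
    · exact hv
    · exact mem_cycInterval.2 (Or.inr (Or.inl rfl))
    · -- (s,v,t) ∈ W, (v,w,t) ∈ W, want w ∈ [s,t]
      by_cases hws : w = s
      · exact mem_cycInterval.2 (Or.inl hws)
      by_cases hwt : (s,w,t) ∈ W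
      · exact mem_cycInterval.2 (Or.inr (Or.inr hwt))
      have hst : s ≠ t := (allNe hW hv').2.2
      have hwt2 : w ≠ t := (allNe hW hw').2.1
      have htws : (t,w,s) ∈ W := total hW (Ne.symm hws) hwt2 hst hwt
      exact absurd (tr hW (rot hW (rot hW hw')) htws) (asym hW hv')

lemma claim3 (hW : IsCyclicOrder W) {s t u v : S} (hu : (s,u,t) ∈ W) (hv : (s,v,t) ∈ W)
    (huv : (s,u,v) ∈ W) : cycInterval W u v ⊆ cycInterval W s t := by
  intro w hw
  rcases mem_cycInterval.1 hw with rfl | rfl | hw'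
  · exact mem_cycInterval.2 (Or.inr (Or.inr hu))
  · exact mem_cycInterval.2 (Or.inr (Or.inr hv))
  · exact mem_cycInterval.2 (Or.inr (Or.inr (tr hW (lemD hW huv hw') hv)))

lemma interval_isInterval (hW : IsCyclicOrder W) (s t : S) :
    IsInterval W (cycInterval W s t) := by
  intro u hu v hv
  rcases mem_cycInterval.1 hu with rfl | rfl | hu'
  · exact Or.inl (claim1 hW hv)
  · exact Or.inr (claim2 hW hv)
  rcases mem_cycInterval.1 hv with rfl | rfl | hv'
  · exact Or.inr (claim1 hW hu)
  · exact Or.inl (claim2 hW hu)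
  by_cases huv : u = v
  · subst huv
    refine Or.inl ?_
    intro w hw
    rcases mem_cycInterval.1 hw with rfl | rfl | hw'
    · exact hu
    · exact hu
    · exact absurd hw' (asym hW hw')
  by_cases hsuv : (s,u,v) ∈ W
  · exact Or.inl (claim3 hW hu' hv' hsuv)
  · have hsu : s ≠ u := (allNe hW hu').1
    have hsv : s ≠ v := (allNe hW hv').1
    have : (v,u,s) ∈ W := total hW hsu huv hsv hsuv
    exact Or.inr (claim3 hW hv' hu' (rot hW (rot hW this)))

end CycAux


namespace CycAux

section Main

variable {S S' : Type*} {Z : Set (S × S × S)} {Z' : Set (S' × S' × S')} {f : S → S'}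
variable (hZ : IsCyclicOrder Z) (hZ' : IsCyclicOrder Z')
variable (h : ∀ I : Set S', IsInterval Z' I → IsInterval Z (f ⁻¹' I))

def Pos (Z : Set (S × S × S)) (Z' : Set (S' × S' × S')) (f : S → S') (a b c : S) : Prop :=
  (a,b,c) ∈ Z ∧ (f a, f b, f c) ∈ Z'

include hZ hZ'

lemma posRot {a b c : S} (hp : Pos Z Z' f a b c) : Pos Z Z' f b c a :=
  ⟨rot hZ hp.1, rot hZ' hp.2⟩

include h

/-- key interval-preimage consequence -/
lemma arcMap {a b c : S} (hp : Pos Z Z' f a b c) {w : S} (hw : w ∈ cycInterval Z a b) :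
    f w ∈ cycInterval Z' (f a) (f b) := by
  have hK : IsInterval Z (f ⁻¹' (cycInterval Z' (f a) (f b))) :=
    h _ (interval_isInterval hZ' (f a) (f b))
  have haK : a ∈ f ⁻¹' (cycInterval Z' (f a) (f b)) := mem_cycInterval.2 (Or.inl rfl)
  have hbK : b ∈ f ⁻¹' (cycInterval Z' (f a) (f b)) := mem_cycInterval.2 (Or.inr (Or.inl rfl))
  rcases hK a haK b hbK with h1 | h2
  · exact h1 hw
  · exfalso
    have hcK : c ∈ f ⁻¹' (cycInterval Z' (f a) (f b)) :=
      h2 (mem_cycInterval.2 (Or.inr (Or.inr (rot hZ hp.1))))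
    rcases mem_cycInterval.1 hcK with he | he | he
    · exact (allNe hZ' hp.2).2.2 he.symm
    · exact (allNe hZ' hp.2).2.1 he.symm
    · exact asym hZ' (rot hZ' hp.2) he

/-- keep-left step -/
lemma stepL {a b c d : S} (hp : Pos Z Z' f a b c) (hd : (a,d,b) ∈ Z) :
    Pos Z Z' f a d c ∨ (f d = f a ∧ Pos Z Z' f d b c) := by
  have zadc : (a,d,c) ∈ Z := tr hZ hd hp.1
  have zdbc : (d,b,c) ∈ Z := rot hZ (rot hZ (tr hZ (rot hZ hp.1) (rot hZ (rot hZ hd))))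
  have him := arcMap hZ hZ' h hp (mem_cycInterval.2 (Or.inr (Or.inr hd)))
  rcases mem_cycInterval.1 him with he | he | he
  · refine Or.inr ⟨he, zdbc, ?_⟩
    rw [he]; exact hp.2
  · refine Or.inl ⟨zadc, ?_⟩
    rw [he]; exact hp.2
  · exact Or.inl ⟨zadc, tr hZ' he hp.2⟩

/-- keep-right step -/
lemma stepR {a b c d : S} (hp : Pos Z Z' f a b c) (hd : (a,d,b) ∈ Z) :
    Pos Z Z' f d b c ∨ (f d = f b ∧ Pos Z Z' f a d c) := by
  have zadc : (a,d,c) ∈ Z := tr hZ hd hp.1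
  have zdbc : (d,b,c) ∈ Z := rot hZ (rot hZ (tr hZ (rot hZ hp.1) (rot hZ (rot hZ hd))))
  have him := arcMap hZ hZ' h hp (mem_cycInterval.2 (Or.inr (Or.inr hd)))
  rcases mem_cycInterval.1 him with he | he | he
  · refine Or.inl ⟨zdbc, ?_⟩
    rw [he]; exact hp.2
  · refine Or.inr ⟨he, zadc, ?_⟩
    rw [he]; exact hp.2
  · exact Or.inl ⟨zdbc, lemD2 hZ' (rot hZ' he) (rot hZ' hp.2)⟩

lemma posAt {a b c : S} (hp : Pos Z Z' f a b c) (d : S) : ∃ u v, Pos Z Z' f d u v := by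
  by_cases h1 : d = a
  · exact ⟨b, c, h1 ▸ hp⟩
  by_cases h2 : d = b
  · exact ⟨c, a, h2 ▸ posRot hZ hZ' hp⟩
  by_cases h3 : d = c
  · exact ⟨a, b, h3 ▸ posRot hZ hZ' (posRot hZ hZ' hp)⟩
  rcases split hZ hp.1 d h1 h2 h3 with hd | hd | hd
  · rcases stepL hZ hZ' h hp hd with hq | ⟨_, hq⟩
    · exact ⟨c, a, posRot hZ hZ' hq⟩
    · exact ⟨b, c, hq⟩
  · rcases stepL hZ hZ' h (posRot hZ hZ' hp) hd with hq | ⟨_, hq⟩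
    · exact ⟨a, b, posRot hZ hZ' hq⟩
    · exact ⟨c, a, hq⟩
  · rcases stepL hZ hZ' h (posRot hZ hZ' (posRot hZ hZ' hp)) hd with hq | ⟨_, hq⟩
    · exact ⟨b, c, posRot hZ hZ' hq⟩
    · exact ⟨a, b, hq⟩

lemma posPair {x p q y : S} (hp : Pos Z Z' f x p q) (hxy : y ≠ x) (hf : f y ≠ f x) :
    ∃ r, Pos Z Z' f x y r ∨ Pos Z Z' f y x r := by
  by_cases h1 : y = p
  · exact ⟨q, Or.inl (h1 ▸ hp)⟩
  by_cases h2 : y = q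
  · exact ⟨p, Or.inr (h2 ▸ posRot hZ hZ' (posRot hZ hZ' hp))⟩
  rcases split hZ hp.1 y hxy h1 h2 with hd | hd | hd
  · rcases stepL hZ hZ' h hp hd with hq | ⟨he, _⟩
    · exact ⟨q, Or.inl hq⟩
    · exact absurd he hf
  · rcases stepL hZ hZ' h (posRot hZ hZ' hp) hd with hq | ⟨_, hq⟩
    · exact ⟨p, Or.inr (posRot hZ hZ' hq)⟩
    · exact ⟨q, Or.inl (posRot hZ hZ' (posRot hZ hZ' hq))⟩
  · rcases stepR hZ hZ' h (posRot hZ hZ' (posRot hZ hZ' hp)) hd with hq | ⟨he, _⟩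
    · exact ⟨p, Or.inr hq⟩
    · exact absurd he hf

lemma posTriple' {x y r z : S} (hp : Pos Z Z' f x y r) (hzx : z ≠ x) (hzy : z ≠ y)
    (hfx : f z ≠ f x) (hfy : f z ≠ f y) :
    Pos Z Z' f x y z ∨ Pos Z Z' f y x z := by
  by_cases h1 : z = r
  · exact Or.inl (h1 ▸ hp)
  rcases split hZ hp.1 z hzx hzy h1 with hd | hd | hd
  · -- z ∈ (x,y)
    have him := arcMap hZ hZ' h hp (mem_cycInterval.2 (Or.inr (Or.inr hd)))
    rcases mem_cycInterval.1 him with he | he | he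
    · exact absurd he hfx
    · exact absurd he hfy
    · exact Or.inr (posRot hZ hZ' (posRot hZ hZ' ⟨hd, he⟩))
  · -- z ∈ (y,r)
    rcases stepL hZ hZ' h (posRot hZ hZ' hp) hd with hq | ⟨he, _⟩
    · exact Or.inl (posRot hZ hZ' (posRot hZ hZ' hq))
    · exact absurd he hfy
  · -- z ∈ (r,x)
    rcases stepR hZ hZ' h (posRot hZ hZ' (posRot hZ hZ' hp)) hd with hq | ⟨he, _⟩
    · exact Or.inl (posRot hZ hZ' hq)
    · exact absurd he hfx

end Main

end CycAux

/-- If preimages of intervals under `f` are intervals, then `f` is monotone or a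
mirror of a monotone map. -/
theorem stmt5 {S S' : Type*} (Z : Set (S × S × S)) (Z' : Set (S' × S' × S'))
    (hZ : IsCyclicOrder Z) (hZ' : IsCyclicOrder Z') (f : S → S')
    (h : ∀ I : Set S', IsInterval Z' I → IsInterval Z (f ⁻¹' I)) :
    CycMonotone Z Z' f ∨ CycMonotone Z (mirrorCyc Z') f := by
  by_cases hm : CycMonotone Z Z' f
  · exact Or.inl hm
  refine Or.inr ?_
  intro x y z hxyz
  have hz' : (f z, f y, f x) ∈ Z' := hxyz
  by_contra hne
  have hfd := CycAux.allNe hZ' hz'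
  have hzy : z ≠ y := fun e => hfd.1 (congrArg f e)
  have hyx : y ≠ x := fun e => hfd.2.1 (congrArg f e)
  have hzx : z ≠ x := fun e => hfd.2.2 (congrArg f e)
  have hzyx : (z,y,x) ∈ Z := CycAux.total hZ hyx.symm hzy.symm hzx.symm hne
  have pzyx : CycAux.Pos Z Z' f z y x := ⟨hzyx, hz'⟩
  -- extract a bad triple from non-monotonicity
  unfold CycMonotone at hm
  push_neg at hm
  obtain ⟨a, b, c, habc, hnabc⟩ := hm
  have hfd2 := CycAux.allNe hZ' habc
  have hab : a ≠ b := fun e => hfd2.1 (congrArg f e)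
  have hbc : b ≠ c := fun e => hfd2.2.1 (congrArg f e)
  have hac : a ≠ c := fun e => hfd2.2.2 (congrArg f e)
  have hcba : (c,b,a) ∈ Z := CycAux.total hZ hab hbc hac hnabc
  -- build a positive triple on {a,b,c}
  obtain ⟨u, v, pc⟩ := CycAux.posAt hZ hZ' h pzyx c
  obtain ⟨r, hr⟩ := CycAux.posPair hZ hZ' h pc hbc hfd2.2.1
  have final : CycAux.Pos Z Z' f c b a ∨ CycAux.Pos Z Z' f b c a := by
    rcases hr with hr | hr
    · exact CycAux.posTriple' hZ hZ' h hr hac hab hfd2.2.2 hfd2.1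
    · exact (CycAux.posTriple' hZ hZ' h hr hab hac hfd2.1 hfd2.2.2).symm
  rcases final with hf | hf
  · exact CycAux.asym hZ' habc hf.2
  · exact CycAux.asym hZ (CycAux.rot hZ (CycAux.rot hZ hf.1)) hcba
end

section
/- Let L be a linear order on a set S, let V(L) be the set of initial segments of L ordered by inclusion, and let D(L) be the linear order on the disjoint union of S and V(L) defined by: x ≤ y iff (x, y ∈ S and x ≤_L y) or (x, y ∈ V(L) and x ⊆ y) or (y ∈ V(L), x ∈ S, and x ∈ y) or (x ∈ V(L), y ∈ S, and y ∈ S \ x). Then D(L) is a complete linear order: every subset of S ∪ V(L) has a supremum and an infimum in D(L). -/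
/-- An initial segment of a linear order. -/
def InitSeg {S : Type*} [LinearOrder S] (A : Set S) : Prop :=
  ∀ s ∈ A, ∀ t, t ≤ s → t ∈ A

/-- The linear order `D(L)` on the disjoint union of `S` and the set of initial
segments of `S`. -/
def DLe {S : Type*} [LinearOrder S] :
    S ⊕ {A : Set S // InitSeg A} → S ⊕ {A : Set S // InitSeg A} → Prop
  | Sum.inl x, Sum.inl y => x ≤ y
  | Sum.inr A, Sum.inr B => A.1 ⊆ B.1
  | Sum.inl x, Sum.inr A => x ∈ A.1
  | Sum.inr A, Sum.inl x => x ∉ A.1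

lemma DLe_trans {S : Type*} [LinearOrder S]
    (x y z : S ⊕ {A : Set S // InitSeg A}) (h1 : DLe x y) (h2 : DLe y z) :
    DLe x z := by
  rcases x with x | A <;> rcases y with y | B <;> rcases z with z | C <;>
    simp only [DLe] at h1 h2 ⊢
  · exact h1.trans h2
  · exact C.2 y h2 x h1
  · by_contra h
    exact h2 (B.2 x h1 z (le_of_not_ge h))
  · exact h2 h1
  · exact fun hz => h1 (A.2 z hz y h2)
  · intro a ha
    rcases le_total a y with h | h
    · exact C.2 y h2 a h
    · exact absurd (A.2 a ha y h) h1
  · exact fun hz => h2 (h1 hz)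
  · exact fun a ha => h2 (h1 ha)

lemma DLe_antisymm {S : Type*} [LinearOrder S]
    (x y : S ⊕ {A : Set S // InitSeg A}) (h1 : DLe x y) (h2 : DLe y x) :
    x = y := by
  rcases x with x | A <;> rcases y with y | B <;> simp only [DLe] at h1 h2
  · exact congrArg Sum.inl (le_antisymm h1 h2)
  · exact absurd h1 h2
  · exact absurd h2 h1
  · exact congrArg Sum.inr (Subtype.ext (subset_antisymm h1 h2))

/-- `D(L)` is a complete linear order: it is reflexive, antisymmetric, transitive and
total, and every subset has a supremum and an infimum. -/
theorem stmt6 {S : Type*} [LinearOrder S] :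
    (∀ x : S ⊕ {A : Set S // InitSeg A}, DLe x x) ∧
    (∀ x y : S ⊕ {A : Set S // InitSeg A}, DLe x y → DLe y x → x = y) ∧
    (∀ x y z : S ⊕ {A : Set S // InitSeg A}, DLe x y → DLe y z → DLe x z) ∧
    (∀ x y : S ⊕ {A : Set S // InitSeg A}, DLe x y ∨ DLe y x) ∧
    (∀ T : Set (S ⊕ {A : Set S // InitSeg A}),
      ∃ u, (∀ x ∈ T, DLe x u) ∧ ∀ w, (∀ x ∈ T, DLe x w) → DLe u w) ∧
    (∀ T : Set (S ⊕ {A : Set S // InitSeg A}),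
      ∃ l, (∀ x ∈ T, DLe l x) ∧ ∀ w, (∀ x ∈ T, DLe w x) → DLe w l) := by
  refine ⟨?_, DLe_antisymm, DLe_trans, ?_, ?_, ?_⟩
  · rintro (x | A) <;> simp [DLe]
  · rintro (x | A) (y | B) <;> simp only [DLe]
    · exact le_total x y
    · exact em _
    · exact (em _).symm
    · rcases em (A.1 ⊆ B.1) with h | h
      · exact Or.inl h
      · obtain ⟨b, hbA, hbB⟩ := Set.not_subset.1 h
        refine Or.inr fun a ha => ?_
        rcases le_total a b with h1 | h1
        · exact A.2 b hbA a h1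
        · exact absurd (B.2 a ha b h1) hbB
  · intro T
    by_cases hmax : ∃ y, Sum.inl y ∈ T ∧ ∀ x ∈ T, DLe x (Sum.inl y)
    · obtain ⟨y, hyT, hy⟩ := hmax
      exact ⟨Sum.inl y, hy, fun w hw => hw _ hyT⟩
    · set U : Set S := {s | ∃ x ∈ T, DLe (Sum.inl s) x} with hU
      have hUseg : InitSeg U := by
        rintro s ⟨x, hx, hsx⟩ t hts
        exact ⟨x, hx, DLe_trans _ (Sum.inl s) _ hts hsx⟩
      refine ⟨Sum.inr ⟨U, hUseg⟩, ?_, ?_⟩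
      · rintro (y | A) hx
        · exact ⟨_, hx, le_refl y⟩
        · exact fun s hs => ⟨_, hx, hs⟩
      · rintro (z | B) hw
        · rintro ⟨x, hx, hzx⟩
          have heq := DLe_antisymm _ _ hzx (hw x hx)
          exact hmax ⟨z, heq ▸ hx, fun x' hx' => heq ▸ hw x' hx'⟩
        · rintro s ⟨x, hx, hsx⟩
          exact DLe_trans (Sum.inl s) x _ hsx (hw x hx)
  · intro T
    by_cases hmin : ∃ y, Sum.inl y ∈ T ∧ ∀ x ∈ T, DLe (Sum.inl y) x
    · obtain ⟨y, hyT, hy⟩ := hmin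
      exact ⟨Sum.inl y, hy, fun w hw => hw _ hyT⟩
    · set L : Set S := {s | ∀ x ∈ T, DLe (Sum.inl s) x} with hL
      have hLseg : InitSeg L := by
        intro s hs t hts x hx
        exact DLe_trans _ (Sum.inl s) _ hts (hs x hx)
      refine ⟨Sum.inr ⟨L, hLseg⟩, ?_, ?_⟩
      · rintro (y | A) hx
        · intro hy
          exact hmin ⟨y, hx, hy⟩
        · exact fun s hs => hs _ hx
      · rintro (z | B) hw
        · exact fun x hx => hw x hx
        · intro a ha x hx
          exact DLe_trans _ (Sum.inr B) x ha (hw x hx)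
end

section
/- Let Z be a cyclic order on a set S with at least two elements, and let T, on ground set R ⊇ S, be a cycle completion of Z. Then for any two distinct elements v, w of R \ S, the set [v, w]_T ∩ S is a non-trivial interval of Z (i.e., it is neither empty nor all of S). -/
section Helpers

variable {R : Type*} {T : Set (R × R × R)}

lemma cyc_rot (hT : IsCyclicOrder T) {a b c : R} (h : (a, b, c) ∈ T) : (b, c, a) ∈ T :=
  hT.1 a b c h

lemma cyc_rot2 (hT : IsCyclicOrder T) {a b c : R} (h : (a, b, c) ∈ T) : (c, a, b) ∈ T :=
  cyc_rot hT (cyc_rot hT h)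

lemma cyc_asym (hT : IsCyclicOrder T) {a b c : R} (h : (a, b, c) ∈ T) : (c, b, a) ∉ T :=
  hT.2.1 a b c h

lemma cyc_trans (hT : IsCyclicOrder T) {a b c d : R} (h1 : (a, b, c) ∈ T)
    (h2 : (a, c, d) ∈ T) : (a, b, d) ∈ T :=
  hT.2.2.2 a b c d h1 h2

lemma cyc_tot (hT : IsCyclicOrder T) {a b c : R} (hab : a ≠ b) (hbc : b ≠ c) (hac : a ≠ c)
    (h : (a, b, c) ∉ T) : (c, b, a) ∈ T :=
  hT.2.2.1 a b c hab hbc hac h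

lemma cyc_ne12 (hT : IsCyclicOrder T) {a b c : R} (h : (a, b, c) ∈ T) : a ≠ b := by
  rintro rfl
  exact cyc_asym hT h (cyc_rot hT (cyc_rot hT h))

lemma cyc_ne23 (hT : IsCyclicOrder T) {a b c : R} (h : (a, b, c) ∈ T) : b ≠ c := by
  rintro rfl
  exact cyc_ne12 hT (cyc_rot hT h) rfl

lemma cyc_ne13 (hT : IsCyclicOrder T) {a b c : R} (h : (a, b, c) ∈ T) : a ≠ c := by
  rintro rfl
  exact cyc_ne12 hT (cyc_rot2 hT h) rfl

/-- From `(a,b,c)` and `(b,d,c)` deduce `(a,d,c)`. -/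
lemma cyc_ins1 (hT : IsCyclicOrder T) {a b c d : R} (h1 : (a, b, c) ∈ T)
    (h2 : (b, d, c) ∈ T) : (a, d, c) ∈ T :=
  cyc_rot hT (cyc_trans hT (cyc_rot2 hT h1) (cyc_rot2 hT h2))

/-- From `(a,b,c)` and `(b,d,c)` deduce `(a,b,d)`. -/
lemma cyc_ins2 (hT : IsCyclicOrder T) {a b c d : R} (h1 : (a, b, c) ∈ T)
    (h2 : (b, d, c) ∈ T) : (a, b, d) ∈ T :=
  cyc_rot2 hT (cyc_trans hT h2 (cyc_rot hT h1))

/-- From `(a,d,b)` and `(a,b,c)` deduce `(d,b,c)`. -/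
lemma cyc_ins3 (hT : IsCyclicOrder T) {a b c d : R} (h1 : (a, d, b) ∈ T)
    (h2 : (a, b, c) ∈ T) : (d, b, c) ∈ T :=
  cyc_rot2 hT (cyc_trans hT (cyc_rot hT h2) (cyc_rot2 hT h1))

/-- Trichotomy inside an interval: if `m` and `s` both lie in `(x,y)` and `s ≠ m`,
then `s ∈ (x,m)` or `s ∈ (m,y)`. -/
lemma cyc_trich (hT : IsCyclicOrder T) {x m y s : R} (hm : (x, m, y) ∈ T)
    (hs : (x, s, y) ∈ T) (hsm : s ≠ m) : (x, s, m) ∈ T ∨ (m, s, y) ∈ T := by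
  by_cases h : (x, s, m) ∈ T
  · exact Or.inl h
  · right
    have hmsx : (m, s, x) ∈ T :=
      cyc_tot hT (cyc_ne12 hT hs) hsm (cyc_ne12 hT hm) h
    have : (s, y, m) ∈ T :=
      cyc_trans hT (cyc_rot hT hs) (cyc_rot hT hmsx)
    exact cyc_rot2 hT this

lemma mem_cycInterval {Z : Set (R × R × R)} {x y c : R} :
    c ∈ cycInterval Z x y ↔ c = x ∨ c = y ∨ (x, c, y) ∈ Z := by
  constructor
  · rintro (h | h)
    · rcases h with h | h
      · exact Or.inl h
      · exact Or.inr (Or.inl h)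
    · exact Or.inr (Or.inr h)
  · rintro (rfl | rfl | h)
    · exact Or.inl (Or.inl rfl)
    · exact Or.inl (Or.inr rfl)
    · exact Or.inr h

/-- The trace on `S` of any interval between two points outside `S` is an interval
of the induced cyclic order. -/
lemma trace_isInterval (hT : IsCyclicOrder T) {S : Set R} {v w : R} (hv : v ∉ S)
    (hw : w ∉ S) : IsInterval (inducedCycOrder T S) (cycInterval T v w ∩ S) := by
  intro s hs t ht
  obtain ⟨hs1, hsS⟩ := hs
  obtain ⟨ht1, htS⟩ := ht
  have hvs : (v, s, w) ∈ T := by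
    rcases mem_cycInterval.mp hs1 with rfl | rfl | h
    · exact absurd hsS hv
    · exact absurd hsS hw
    · exact h
  have hvt : (v, t, w) ∈ T := by
    rcases mem_cycInterval.mp ht1 with rfl | rfl | h
    · exact absurd htS hv
    · exact absurd htS hw
    · exact h
  by_cases hst : s = t
  · subst hst
    left
    intro c hc
    rcases mem_cycInterval.mp hc with rfl | rfl | h
    · exact ⟨hs1, hsS⟩
    · exact ⟨hs1, hsS⟩
    · exact absurd h.1 (cyc_asym hT h.1)
  · have hvsne : v ≠ s := fun h => hv (h ▸ hsS)
    have hvtne : v ≠ t := fun h => hv (h ▸ htS)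
    by_cases h1 : (v, s, t) ∈ T
    · left
      intro c hc
      rcases mem_cycInterval.mp hc with rfl | rfl | h
      · exact ⟨hs1, hsS⟩
      · exact ⟨ht1, htS⟩
      · have hc1 : (v, c, t) ∈ T := cyc_ins1 hT h1 h.1
        have hc2 : (v, c, w) ∈ T := cyc_trans hT hc1 hvt
        exact ⟨mem_cycInterval.mpr (Or.inr (Or.inr hc2)), h.2.2.1⟩
    · have h2 : (v, t, s) ∈ T := by
        have := cyc_tot hT hvsne hst hvtne h1
        exact cyc_rot2 hT (cyc_rot2 hT (cyc_rot hT this))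
      right
      intro c hc
      rcases mem_cycInterval.mp hc with rfl | rfl | h
      · exact ⟨ht1, htS⟩
      · exact ⟨hs1, hsS⟩
      · have hc1 : (v, c, s) ∈ T := cyc_ins1 hT h2 h.1
        have hc2 : (v, c, w) ∈ T := cyc_trans hT hc1 hvs
        exact ⟨mem_cycInterval.mpr (Or.inr (Or.inr hc2)), h.2.2.1⟩

end Helpers


/-- Key lemma: the trace on `S` of the interval between two distinct cutpoints of a
cycle completion is nonempty. -/
lemma trace_nonempty {R : Type*} {T : Set (R × R × R)} {S : Set R}
    (hcc : IsCycleCompletion T S) {a b : R} (ha : a ∈ S) (hb : b ∈ S) (hab : a ≠ b)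
    {v w : R} (hv : v ∉ S) (hw : w ∉ S) (hvw : v ≠ w) :
    (cycInterval T v w ∩ S).Nonempty := by
  obtain ⟨hT, hcomp⟩ := hcc
  by_contra hne0
  rw [Set.not_nonempty_iff_eq_empty] at hne0
  -- no element of S lies in the interval [v,w]
  have hnotin : ∀ s, s ∈ S → (v, s, w) ∉ T := by
    intro s hs h
    have hmem : s ∈ cycInterval T v w ∩ S :=
      ⟨mem_cycInterval.mpr (Or.inr (Or.inr h)), hs⟩
    rw [hne0] at hmem
    exact hmem
  have hout : ∀ s, s ∈ S → (w, s, v) ∈ T := by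
    intro s hs
    have h1 : v ≠ s := fun h => hv (h ▸ hs)
    have h2 : s ≠ w := fun h => hw (h ▸ hs)
    exact cyc_tot hT h1 h2 hvw (hnotin s hs)
  -- apply the completion property to the singleton {a}
  have hIa : IsInterval (inducedCycOrder T S) {a} := by
    intro s hs t ht
    rw [Set.mem_singleton_iff] at hs ht
    subst hs; subst ht
    left
    intro c hc
    rcases mem_cycInterval.mp hc with rfl | rfl | h
    · rfl
    · rfl
    · exact absurd h.1 (cyc_asym hT h.1)
  obtain ⟨⟨p, q⟩, ⟨hp, hq, htr⟩, huniq⟩ :=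
    hcomp {a} (Set.singleton_subset_iff.mpr ha) hIa ⟨a, rfl⟩
      (by intro h; rw [← h] at hb; exact hab (Set.eq_of_mem_singleton hb).symm)
  simp only at hp hq htr
  have hpq : (p, a, q) ∈ T := by
    have h1 : a ∈ cycInterval T p q ∩ S := by rw [htr]; exact rfl
    rcases mem_cycInterval.mp h1.1 with rfl | rfl | h
    · exact absurd ha hp
    · exact absurd ha hq
    · exact h
  have htr' : ∀ s, s ∈ S → (p, s, q) ∈ T → s = a := by
    intro s hs h
    have hmem : s ∈ cycInterval T p q ∩ S :=
      ⟨mem_cycInterval.mpr (Or.inr (Or.inr h)), hs⟩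
    rw [htr] at hmem
    exact hmem
  -- no element outside S lies strictly inside (p,q)
  have key : ∀ u, u ∉ S → (p, u, q) ∈ T → False := by
    intro u hu hpuq
    have hua : u ≠ a := fun h => hu (h ▸ ha)
    rcases cyc_trich hT hpq hpuq hua with h1 | h2
    · -- u ∈ (p,a) : second pair (u,q)
      have huaq : (u, a, q) ∈ T := cyc_ins3 hT h1 hpq
      have htru : cycInterval T u q ∩ S = {a} := by
        apply Set.eq_singleton_iff_unique_mem.mpr
        refine ⟨⟨mem_cycInterval.mpr (Or.inr (Or.inr huaq)), ha⟩, ?_⟩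
        rintro s ⟨hs1, hsS⟩
        rcases mem_cycInterval.mp hs1 with rfl | rfl | h
        · exact absurd hsS hu
        · exact absurd hsS hq
        · exact htr' s hsS (cyc_ins1 hT hpuq h)
      have := huniq (u, q) ⟨hu, hq, htru⟩
      have hup : u = p := congrArg Prod.fst this
      exact cyc_ne12 hT h1 hup.symm
    · -- u ∈ (a,q) : second pair (p,u)
      have hpau : (p, a, u) ∈ T := cyc_ins2 hT hpq h2
      have htru : cycInterval T p u ∩ S = {a} := by
        apply Set.eq_singleton_iff_unique_mem.mpr
        refine ⟨⟨mem_cycInterval.mpr (Or.inr (Or.inr hpau)), ha⟩, ?_⟩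
        rintro s ⟨hs1, hsS⟩
        rcases mem_cycInterval.mp hs1 with rfl | rfl | h
        · exact absurd hsS hp
        · exact absurd hsS hu
        · exact htr' s hsS (cyc_trans hT h hpuq)
      have := huniq (p, u) ⟨hp, hu, htru⟩
      have huq : u = q := congrArg Prod.snd this
      exact cyc_ne23 hT h2 huq
  have hbqp : (q, b, p) ∈ T := by
    have h1 : p ≠ b := fun h => hp (h ▸ hb)
    have h2 : b ≠ q := fun h => hq (h ▸ hb)
    refine cyc_tot hT h1 h2 (cyc_ne13 hT hpq) ?_
    intro h
    exact hab.symm (htr' b hb h)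
  -- case analysis on positions of v and w
  by_cases hvp : v = p
  · by_cases hwq : w = q
    · exact hnotin a ha (by rw [hvp, hwq]; exact hpq)
    · have hqwp : (q, w, p) ∈ T := by
        refine cyc_tot hT ?_ hwq (cyc_ne13 hT hpq) (fun h => key w hw h)
        exact fun h => hvw (hvp.trans h)
      have hpaw : (p, a, w) ∈ T := cyc_trans hT hpq (cyc_rot2 hT hqwp)
      exact hnotin a ha (by rw [hvp]; exact hpaw)
  · by_cases hvq : v = q
    · by_cases hwp : w = p
      · exact hnotin b hb (by rw [hvq, hwp]; exact hbqp)
      · -- case A: v = q, w ∈ (q,p); second pair (p,w)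
        have hqwp : (q, w, p) ∈ T := by
          refine cyc_tot hT ?_ ?_ (cyc_ne13 hT hpq) (fun h => key w hw h)
          · exact fun h => hwp h.symm
          · exact fun h => hvw (hvq.trans h.symm)
        have hpqw : (p, q, w) ∈ T := cyc_rot2 hT hqwp
        have hpaw : (p, a, w) ∈ T := cyc_trans hT hpq hpqw
        have haqw : (a, q, w) ∈ T := cyc_ins2 hT (cyc_rot hT hpq) hqwp
        have htrw : cycInterval T p w ∩ S = {a} := by
          apply Set.eq_singleton_iff_unique_mem.mpr
          refine ⟨⟨mem_cycInterval.mpr (Or.inr (Or.inr hpaw)), ha⟩, ?_⟩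
          rintro s ⟨hs1, hsS⟩
          rcases mem_cycInterval.mp hs1 with rfl | rfl | h
          · exact absurd hsS hp
          · exact absurd hsS hw
          · by_cases hsa : s = a
            · exact hsa
            · rcases cyc_trich hT hpaw h hsa with h1 | h2
              · exact htr' s hsS (cyc_trans hT h1 hpq)
              · have hsq : s ≠ q := fun hh => hq (hh ▸ hsS)
                rcases cyc_trich hT haqw h2 hsq with h3 | h4
                · exact htr' s hsS (cyc_ins1 hT hpq h3)
                · exact absurd (by rw [hvq]; exact h4 : (v, s, w) ∈ T) (hnotin s hsS)
        have := huniq (p, w) ⟨hp, hw, htrw⟩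
        have : w = q := congrArg Prod.snd this
        exact cyc_ne12 hT hqwp this.symm
    · have hqvp : (q, v, p) ∈ T := by
        refine cyc_tot hT ?_ ?_ ?_ (fun h => key v hv h)
        · exact fun h => hvp h.symm
        · exact hvq
        · exact cyc_ne13 hT hpq
      have hqva : (q, v, a) ∈ T := cyc_trans hT hqvp (cyc_rot2 hT hpq)
      have hvaq : (v, a, q) ∈ T := cyc_rot hT hqva
      by_cases hwp : w = p
      · -- case B: w = p, v ∈ (q,p); second pair (v,q)
        have hvpa : (v, p, a) ∈ T := cyc_ins3 hT hqvp (cyc_rot2 hT hpq)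
        have htrv : cycInterval T v q ∩ S = {a} := by
          apply Set.eq_singleton_iff_unique_mem.mpr
          refine ⟨⟨mem_cycInterval.mpr (Or.inr (Or.inr hvaq)), ha⟩, ?_⟩
          rintro s ⟨hs1, hsS⟩
          rcases mem_cycInterval.mp hs1 with rfl | rfl | h
          · exact absurd hsS hv
          · exact absurd hsS hq
          · by_cases hsa : s = a
            · exact hsa
            · rcases cyc_trich hT hvaq h hsa with h1 | h2
              · have hsp : s ≠ p := fun hh => hp (hh ▸ hsS)
                rcases cyc_trich hT hvpa h1 hsp with h3 | h4
                · exact absurd (by rw [hwp]; exact h3 : (v, s, w) ∈ T) (hnotin s hsS)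
                · exact htr' s hsS (cyc_trans hT h4 hpq)
              · exact htr' s hsS (cyc_ins1 hT hpq h2)
        have := huniq (v, q) ⟨hv, hq, htrv⟩
        have : v = p := congrArg Prod.fst this
        exact hvp this
      · by_cases hwq : w = q
        · exact hnotin a ha (by rw [hwq]; exact hvaq)
        · -- case C: v, w ∈ (q,p)
          have hqwp : (q, w, p) ∈ T := by
            refine cyc_tot hT ?_ ?_ ?_ (fun h => key w hw h)
            · exact fun h => hwp h.symm
            · exact hwq
            · exact cyc_ne13 hT hpq
          have hwav : (w, a, v) ∈ T := hout a ha
          have hqvw : (q, v, w) ∈ T := by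
            by_contra h
            have hwvq : (w, v, q) ∈ T :=
              cyc_tot hT (cyc_ne12 hT hqvp) hvw (cyc_ne12 hT hqwp) h
            have hvqw : (v, q, w) ∈ T := cyc_rot hT hwvq
            exact cyc_asym hT hwav (cyc_trans hT hvaq hvqw)
          have hwqv : (w, q, v) ∈ T := cyc_rot2 hT hqvw
          have hwpq : (w, p, q) ∈ T := cyc_rot hT hqwp
          have hwpv : (w, p, v) ∈ T := cyc_trans hT hwpq hwqv
          have hpqv : (p, q, v) ∈ T := cyc_rot2 hT hqvp
          have hpav : (p, a, v) ∈ T := cyc_trans hT hpq hpqv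
          have hpvw : (p, v, w) ∈ T := by
            by_contra h
            have hwvp : (w, v, p) ∈ T :=
              cyc_tot hT (fun hh => hvp hh.symm) hvw (cyc_ne23 hT hqwp).symm h
            have : (w, v, q) ∈ T := cyc_trans hT hwvp hwpq
            exact cyc_asym hT hqvw this
          have hwaq : (w, a, q) ∈ T := by
            by_contra h
            have hqaw : (q, a, w) ∈ T :=
              cyc_tot hT (fun hh => hw (hh.symm ▸ ha)) (cyc_ne23 hT hpq)
                (cyc_ne12 hT hqwp).symm h
            have : (q, a, p) ∈ T := cyc_trans hT hqaw hqwp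
            exact cyc_asym hT this hpq
          have hwpa : (w, p, a) ∈ T := by
            by_contra h
            have hapw : (a, p, w) ∈ T :=
              cyc_tot hT (cyc_ne23 hT hqwp) (cyc_ne12 hT hpq)
                (fun hh => hw (hh.symm ▸ ha)) h
            have : (p, w, q) ∈ T := cyc_trans hT (cyc_rot hT hapw) hpq
            exact cyc_asym hT hqwp this
          by_cases hc : ∃ c ∈ S, (w, c, p) ∈ T
          · -- C2: some element of S lies in (w,p); two pairs for [p,v] ∩ S
            obtain ⟨c, hcS, hwcp⟩ := hc
            have hJeq : cycInterval T p w ∩ S = cycInterval T p v ∩ S := by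
              ext s
              constructor
              · rintro ⟨hs1, hsS⟩
                rcases mem_cycInterval.mp hs1 with rfl | rfl | h
                · exact absurd hsS hp
                · exact absurd hsS hw
                · have hsv : s ≠ v := fun hh => hv (hh ▸ hsS)
                  rcases cyc_trich hT hpvw h hsv with h1 | h2
                  · exact ⟨mem_cycInterval.mpr (Or.inr (Or.inr h1)), hsS⟩
                  · exact absurd h2 (hnotin s hsS)
              · rintro ⟨hs1, hsS⟩
                rcases mem_cycInterval.mp hs1 with rfl | rfl | h
                · exact absurd hsS hp
                · exact absurd hsS hv
                · exact ⟨mem_cycInterval.mpr (Or.inr (Or.inr (cyc_trans hT h hpvw))), hsS⟩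
            have hJsub : cycInterval T p v ∩ S ⊆ S := Set.inter_subset_right
            have hJint : IsInterval (inducedCycOrder T S) (cycInterval T p v ∩ S) :=
              trace_isInterval hT hp hv
            have hJne : (cycInterval T p v ∩ S).Nonempty :=
              ⟨a, mem_cycInterval.mpr (Or.inr (Or.inr hpav)), ha⟩
            have hJnS : cycInterval T p v ∩ S ≠ S := by
              intro h
              have hcJ : c ∈ cycInterval T p v ∩ S := h.symm ▸ hcS
              rcases mem_cycInterval.mp hcJ.1 with rfl | rfl | hc'
              · exact hp hcS
              · exact hv hcS
              · have h1 : (p, w, v) ∈ T := cyc_trans hT (cyc_rot2 hT hwcp) hc'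
                exact cyc_asym hT hwpv (cyc_rot2 hT h1)
            obtain ⟨⟨x, y⟩, _, huJ⟩ :=
              hcomp (cycInterval T p v ∩ S) hJsub hJint hJne hJnS
            have h1 := huJ (p, v) ⟨hp, hv, rfl⟩
            have h2 := huJ (p, w) ⟨hp, hw, hJeq⟩
            exact hvw (congrArg Prod.snd (h1.trans h2.symm))
          · -- C1: no element of S lies in (w,p); second pair (w,q)
            push_neg at hc
            have htrw : cycInterval T w q ∩ S = {a} := by
              apply Set.eq_singleton_iff_unique_mem.mpr
              refine ⟨⟨mem_cycInterval.mpr (Or.inr (Or.inr hwaq)), ha⟩, ?_⟩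
              rintro s ⟨hs1, hsS⟩
              rcases mem_cycInterval.mp hs1 with rfl | rfl | h
              · exact absurd hsS hw
              · exact absurd hsS hq
              · by_cases hsa : s = a
                · exact hsa
                · rcases cyc_trich hT hwaq h hsa with h1 | h2
                  · have hsp : s ≠ p := fun hh => hp (hh ▸ hsS)
                    rcases cyc_trich hT hwpa h1 hsp with h3 | h4
                    · exact absurd h3 (hc s hsS)
                    · exact htr' s hsS (cyc_trans hT h4 hpq)
                  · exact htr' s hsS (cyc_ins1 hT hpq h2)
            have := huniq (w, q) ⟨hw, hq, htrw⟩
            have : w = p := congrArg Prod.fst this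
            exact (cyc_ne23 hT hqwp) this

/-- For a cycle completion `T` of the induced cyclic order on `S` (with `|S| ≥ 2`),
the trace on `S` of the interval between two distinct cutpoints is a non-trivial
interval of the induced order on `S`. -/
theorem stmt8 {R : Type*} (T : Set (R × R × R)) (S : Set R)
    (hcc : IsCycleCompletion T S)
    (hS : ∃ a ∈ S, ∃ b ∈ S, a ≠ b)
    (v w : R) (hv : v ∉ S) (hw : w ∉ S) (hvw : v ≠ w) :
    IsInterval (inducedCycOrder T S) (cycInterval T v w ∩ S) ∧
      (cycInterval T v w ∩ S).Nonempty ∧ cycInterval T v w ∩ S ≠ S := by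
  obtain ⟨a, ha, b, hb, hab⟩ := hS
  have hT : IsCyclicOrder T := hcc.1
  refine ⟨trace_isInterval hT hv hw, trace_nonempty hcc ha hb hab hv hw hvw, ?_⟩
  intro h
  obtain ⟨s, hs1, hsS⟩ := trace_nonempty hcc ha hb hab hw hv hvw.symm
  have hsmem : s ∈ cycInterval T v w ∩ S := h.symm ▸ hsS
  have h1 : (w, s, v) ∈ T := by
    rcases mem_cycInterval.mp hs1 with rfl | rfl | hh
    · exact absurd hsS hw
    · exact absurd hsS hv
    · exact hh
  have h2 : (v, s, w) ∈ T := by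
    rcases mem_cycInterval.mp hsmem.1 with rfl | rfl | hh
    · exact absurd hsS hv
    · exact absurd hsS hw
    · exact hh
  exact cyc_asym hT h2 h1
end

section
/- Let Z and Z' be cyclic orders on sets S and S', each with at least two elements, with cycle completions T on R and T' on R'. Let F : R → R' be a surjective monotone map with F(S) ⊆ S'. Then for all v, w ∈ R such that F(v) and F(w) are distinct elements of R' \ S', we have F^{-1}(]F(v), F(w)[) = ]v, w[ and F^{-1}([F(v), F(w)]) = [v, w]. -/
section helpers
variable {S : Type*} {Z : Set (S × S × S)}

lemma cyc3 (hZ : IsCyclicOrder Z) {a b c : S} (h : (a,b,c) ∈ Z) : (b,c,a) ∈ Z := hZ.1 a b c h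
lemma casym (hZ : IsCyclicOrder Z) {a b c : S} (h : (a,b,c) ∈ Z) : (c,b,a) ∉ Z := hZ.2.1 a b c h
lemma ctotal (hZ : IsCyclicOrder Z) {a b c : S} (h1 : a ≠ b) (h2 : b ≠ c) (h3 : a ≠ c)
    (h : (a,b,c) ∉ Z) : (c,b,a) ∈ Z := hZ.2.2.1 a b c h1 h2 h3 h
lemma ctrans (hZ : IsCyclicOrder Z) {a b c d : S} (h1 : (a,b,c) ∈ Z) (h2 : (a,c,d) ∈ Z) :
    (a,b,d) ∈ Z := hZ.2.2.2 a b c d h1 h2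

lemma cne12 (hZ : IsCyclicOrder Z) {a b c : S} (h : (a,b,c) ∈ Z) : a ≠ b := by
  rintro rfl; exact casym hZ h (cyc3 hZ (cyc3 hZ h))
lemma cne23 (hZ : IsCyclicOrder Z) {a b c : S} (h : (a,b,c) ∈ Z) : b ≠ c := by
  rintro rfl; exact casym hZ h (cyc3 hZ h)
lemma cne13 (hZ : IsCyclicOrder Z) {a b c : S} (h : (a,b,c) ∈ Z) : a ≠ c := by
  rintro rfl; exact casym hZ h h

lemma cmid (hZ : IsCyclicOrder Z) {a b y c : S} (h1 : (a,b,y) ∈ Z) (h2 : (a,y,c) ∈ Z) :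
    (b,y,c) ∈ Z := by
  have hby : b ≠ y := cne23 hZ h1
  have hyc : y ≠ c := cne23 hZ h2
  have hbc : b ≠ c := by rintro rfl; exact casym hZ h2 (cyc3 hZ h1)
  by_contra hcon
  have h3 : (c,y,b) ∈ Z := ctotal hZ hby hyc hbc hcon
  exact casym hZ (ctrans hZ (cyc3 hZ h3) (cyc3 hZ h2)) h1

lemma cmid2 (hZ : IsCyclicOrder Z) {u m x t : S} (h1 : (u,m,t) ∈ Z) (h2 : (m,x,t) ∈ Z) :
    (u,x,t) ∈ Z :=
  cyc3 hZ (ctrans hZ (cyc3 hZ (cyc3 hZ h1)) (cyc3 hZ (cyc3 hZ h2)))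

end helpers

section cycmain
variable {R : Type*} {T : Set (R × R × R)}

lemma mem_cycInterval_iff {s t y : R} :
    y ∈ cycInterval T s t ↔ y = s ∨ y = t ∨ (s,y,t) ∈ T := by
  simp [cycInterval, Set.mem_union, Set.mem_insert_iff, or_assoc]

lemma singleton_interval (hZ : IsCyclicOrder T) (A : Set R) (s : R) :
    IsInterval (inducedCycOrder T A) {s} := by
  intro x hx y hy
  rcases hx with rfl
  rcases hy with rfl
  left
  intro z hz
  rcases mem_cycInterval_iff.mp hz with rfl | rfl | h
  · rfl
  · rfl
  · exact absurd h.1 (fun hc => cne13 hZ hc rfl)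

lemma interval_lemma (hZ : IsCyclicOrder T) {A : Set R} {u v : R} (hu : u ∉ A) (hv : v ∉ A) :
    IsInterval (inducedCycOrder T A) (cycInterval T u v ∩ A) := by
  rintro s ⟨hsI, hsA⟩ t ⟨htI, htA⟩
  have husv : (u,s,v) ∈ T := by
    rcases mem_cycInterval_iff.mp hsI with rfl | rfl | h
    · exact absurd hsA hu
    · exact absurd hsA hv
    · exact h
  have hutv : (u,t,v) ∈ T := by
    rcases mem_cycInterval_iff.mp htI with rfl | rfl | h
    · exact absurd htA hu
    · exact absurd htA hv
    · exact h
  by_cases hst : s = t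
  · subst hst
    left
    intro z hz
    rcases mem_cycInterval_iff.mp hz with rfl | rfl | h
    · exact ⟨hsI, hsA⟩
    · exact ⟨hsI, hsA⟩
    · exact absurd h.1 (fun hc => cne13 hZ hc rfl)
  · have key : ∀ s' t', (u,s',v) ∈ T → (u,t',v) ∈ T → (u,s',t') ∈ T → s' ∈ cycInterval T u v ∩ A →
        t' ∈ cycInterval T u v ∩ A → cycInterval (inducedCycOrder T A) s' t' ⊆ cycInterval T u v ∩ A := by
      intro s' t' hs' ht' hst' hsm htm z hz
      rcases mem_cycInterval_iff.mp hz with rfl | rfl | h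
      · exact hsm
      · exact htm
      · obtain ⟨hT, -, hzA, -⟩ := h
        have h1 : (u,z,t') ∈ T := cmid2 hZ hst' hT
        have h2 : (u,z,v) ∈ T := ctrans hZ h1 ht'
        exact ⟨Or.inr h2, hzA⟩
    by_cases h : (u,s,t) ∈ T
    · exact Or.inl (key s t husv hutv h ⟨hsI, hsA⟩ ⟨htI, htA⟩)
    · have hus : u ≠ s := fun e => hu (e ▸ hsA)
      have hut : u ≠ t := fun e => hu (e ▸ htA)
      have h' : (u,t,s) ∈ T := cyc3 hZ (cyc3 hZ (ctotal hZ hus hst hut h))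
      exact Or.inr (key t s hutv husv h' ⟨htI, htA⟩ ⟨hsI, hsA⟩)

/-- If `]a,b[` misses `A`, then `[a,c] ∩ A = [b,c] ∩ A` for `c` with `(a,b,c) ∈ T`. -/
lemma lemG (hZ : IsCyclicOrder T) {A : Set R} {a b c : R} (ha : a ∉ A) (hb : b ∉ A)
    (hc : c ∉ A) (habc : (a,b,c) ∈ T) (hgap : ∀ y ∈ A, (a,y,b) ∉ T) :
    cycInterval T a c ∩ A = cycInterval T b c ∩ A := by
  ext y
  constructor
  · rintro ⟨hyI, hyA⟩
    refine ⟨?_, hyA⟩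
    rcases mem_cycInterval_iff.mp hyI with rfl | rfl | h
    · exact absurd hyA ha
    · exact absurd hyA hc
    · have hay : a ≠ y := cne12 hZ h
      have hyb : y ≠ b := fun e => hb (e ▸ hyA)
      have hab : a ≠ b := cne12 hZ habc
      have hbya : (b,y,a) ∈ T := ctotal hZ hay hyb hab (hgap y hyA)
      have haby : (a,b,y) ∈ T := cyc3 hZ (cyc3 hZ hbya)
      exact mem_cycInterval_iff.mpr (Or.inr (Or.inr (cmid hZ haby h)))
  · rintro ⟨hyI, hyA⟩
    refine ⟨?_, hyA⟩
    rcases mem_cycInterval_iff.mp hyI with rfl | rfl | h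
    · exact absurd hyA hb
    · exact absurd hyA hc
    · exact mem_cycInterval_iff.mpr (Or.inr (Or.inr (cmid2 hZ habc h)))

/-- Two distinct points outside `S` cannot bound an `S`-free arc in a cycle completion. -/
lemma step3 {S : Set R} (hcc : IsCycleCompletion T S)
    {s₀ t₀ : R} (hs₀ : s₀ ∈ S) (ht₀ : t₀ ∈ S) (hst₀ : s₀ ≠ t₀)
    {a b : R} (ha : a ∉ S) (hb : b ∉ S) (hab : a ≠ b)
    (hgap : ∀ y ∈ S, (a,y,b) ∉ T) : False := by
  have hZ := hcc.1
  have key : ∀ y ∈ S, (b,y,a) ∈ T := by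
    intro y hy
    have hay : a ≠ y := fun e => ha (e ▸ hy)
    have hyb : y ≠ b := fun e => hb (e ▸ hy)
    exact ctotal hZ hay hyb hab (hgap y hy)
  obtain ⟨s, t, hsS, htS, hbst, hbsa, hbta⟩ :
      ∃ s t, s ∈ S ∧ t ∈ S ∧ (b,s,t) ∈ T ∧ (b,s,a) ∈ T ∧ (b,t,a) ∈ T := by
    by_cases h : (b,s₀,t₀) ∈ T
    · exact ⟨s₀, t₀, hs₀, ht₀, h, key s₀ hs₀, key t₀ ht₀⟩
    · have hbs : b ≠ s₀ := fun e => hb (e ▸ hs₀)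
      have hbt : b ≠ t₀ := fun e => hb (e ▸ ht₀)
      have h' : (b,t₀,s₀) ∈ T := cyc3 hZ (cyc3 hZ (ctotal hZ hbs hst₀ hbt h))
      exact ⟨t₀, s₀, ht₀, hs₀, h', key t₀ ht₀, key s₀ hs₀⟩
  have hst : s ≠ t := cne23 hZ hbst
  -- unique pair for {s}
  obtain ⟨⟨p, q⟩, ⟨hp, hq, hpq⟩, -⟩ :=
    hcc.2 {s} (Set.singleton_subset_iff.mpr hsS) (singleton_interval hZ S s) ⟨s, rfl⟩
      (fun h => hst.symm (by rw [← h] at htS; exact htS))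
  have hsmem : s ∈ cycInterval T p q ∩ S := hpq ▸ rfl
  have hpsq : (p,s,q) ∈ T := by
    rcases mem_cycInterval_iff.mp hsmem.1 with rfl | rfl | h
    · exact absurd hsS hp
    · exact absurd hsS hq
    · exact h
  have htnot : t ∉ cycInterval T p q := by
    intro h
    have : t ∈ ({s} : Set R) := hpq ▸ ⟨h, htS⟩
    exact hst.symm this
  have hqtp : (q,t,p) ∈ T := by
    have hpt : p ≠ t := fun e => hp (e ▸ htS)
    have htq : t ≠ q := fun e => hq (e ▸ htS)
    have hpq' : p ≠ q := cne13 hZ hpsq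
    exact ctotal hZ hpt htq hpq' (fun h => htnot (mem_cycInterval_iff.mpr (Or.inr (Or.inr h))))
  have hpqt : (p,q,t) ∈ T := cyc3 hZ (cyc3 hZ hqtp)
  have hsqt : (s,q,t) ∈ T := cmid hZ hpsq hpqt
  have hbsq : (b,s,q) ∈ T :=
    cyc3 hZ (cyc3 hZ (ctrans hZ hsqt (cyc3 hZ hbst)))
  have hbqt : (b,q,t) ∈ T :=
    cyc3 hZ (ctrans hZ (cyc3 hZ (cyc3 hZ hbst)) (cyc3 hZ (cyc3 hZ hsqt)))
  have hbqa : (b,q,a) ∈ T := ctrans hZ hbqt hbta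
  have habq : (a,b,q) ∈ T := cyc3 hZ (cyc3 hZ hbqa)
  have hasq : (a,s,q) ∈ T := cmid2 hZ habq hbsq
  have hqta : (q,t,a) ∈ T := cmid hZ hbqt hbta
  -- the interval [a,q] ∩ S has two distinct representing pairs
  have hne : (cycInterval T a q ∩ S).Nonempty :=
    ⟨s, mem_cycInterval_iff.mpr (Or.inr (Or.inr hasq)), hsS⟩
  have hneS : cycInterval T a q ∩ S ≠ S := by
    intro h
    have htm : t ∈ cycInterval T a q ∩ S := by rw [h]; exact htS
    rcases mem_cycInterval_iff.mp htm.1 with rfl | rfl | h'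
    · exact ha htS
    · exact hq htS
    · exact casym hZ h' hqta
  obtain ⟨vw, -, huniq⟩ :=
    hcc.2 (cycInterval T a q ∩ S) Set.inter_subset_right (interval_lemma hZ ha hq) hne hneS
  have h1 : (a, q) = vw := huniq (a, q) ⟨ha, hq, rfl⟩
  have h2 : (b, q) = vw := huniq (b, q) ⟨hb, hq, (lemG hZ ha hb hq habq hgap).symm⟩
  exact hab (congrArg Prod.fst (h1.trans h2.symm))

end cycmain
section mapmain
variable {R R' : Type*} {T : Set (R × R × R)} {T' : Set (R' × R' × R')}

lemma lemL1 (hT : IsCyclicOrder T) (hT' : IsCyclicOrder T')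
    {F : R → R'} (hmono : CycMonotone T T' F) {a b y z : R}
    (hFab : F a = F b) (hy : (a,y,b) ∈ T) (hz : (b,z,a) ∈ T)
    (hya : F y ≠ F a) (hza : F z ≠ F a) (hyz : F y ≠ F z) : False := by
  by_cases h : (F a, F y, F z) ∈ T'
  · have h' : (F b, F y, F z) ∈ T' := hFab ▸ h
    have hbyz : (b,y,z) ∈ T := hmono _ _ _ h'
    exact casym hT hbyz (cmid2 hT (cyc3 hT hz) hy)
  · have h' : (F z, F y, F a) ∈ T' := ctotal hT' hya.symm hyz hza.symm h
    have hzya : (z,y,a) ∈ T := hmono _ _ _ h'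
    exact casym hT (ctrans hT hy (cyc3 hT (cyc3 hT hz))) hzya

lemma uniquePre {S : Set R} {S' : Set R'}
    (hcc : IsCycleCompletion T S) (hT' : IsCyclicOrder T')
    (hS : ∃ a ∈ S, ∃ b ∈ S, a ≠ b) (hS' : ∃ a ∈ S', ∃ b ∈ S', a ≠ b)
    {F : R → R'} (hsurj : Function.Surjective F) (hmono : CycMonotone T T' F)
    (hFS : F '' S ⊆ S')
    {a b : R} (hab' : F a = F b) (hFa : F a ∉ S') : a = b := by
  by_contra hab
  have hT := hcc.1
  have haS : a ∉ S := fun h => hFa (hFS ⟨a, h, rfl⟩)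
  have hbS : b ∉ S := fun h => hFa (hab' ▸ hFS ⟨b, h, rfl⟩)
  have main : ∀ y z, (a,y,b) ∈ T → (b,z,a) ∈ T → y ∈ S → z ∈ S → False := by
    intro y z hy hz hyS hzS
    have hFy : F y ∈ S' := hFS ⟨y, hyS, rfl⟩
    have hFz : F z ∈ S' := hFS ⟨z, hzS, rfl⟩
    have hya : F y ≠ F a := fun e => hFa (e ▸ hFy)
    have hza : F z ≠ F a := fun e => hFa (e ▸ hFz)
    by_cases hyz : F y = F z
    · obtain ⟨s₁, hs₁, s₂, hs₂, h12⟩ := hS'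
      obtain ⟨s', hs', hs'ne⟩ : ∃ s' ∈ S', s' ≠ F y := by
        by_cases e : F y = s₁
        · exact ⟨s₂, hs₂, fun e2 => h12 (e ▸ e2.symm ▸ rfl)⟩
        · exact ⟨s₁, hs₁, fun e2 => e e2.symm⟩
      obtain ⟨u, hu⟩ := hsurj s'
      have huS' : F u ∈ S' := hu.symm ▸ hs'
      have hua : u ≠ a := fun e => hFa (e ▸ huS')
      have hub : u ≠ b := fun e => hFa (hab' ▸ e ▸ huS')
      have huA : F u ≠ F a := fun e => hFa (e ▸ huS')
      by_cases h : (a,u,b) ∈ T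
      · exact lemL1 hT hT' hmono hab' h hz huA hza (fun e => hs'ne (hu ▸ hyz ▸ e))
      · have h' : (b,u,a) ∈ T := ctotal hT hua.symm hub hab h
        exact lemL1 hT hT' hmono hab' hy h' hya huA (fun e => hs'ne (hu ▸ e.symm))
    · exact lemL1 hT hT' hmono hab' hy hz hya hza hyz
  obtain ⟨s₀, hs₀, t₀, ht₀, hst₀⟩ := hS
  by_cases hside : ∃ y ∈ S, (a,y,b) ∈ T
  · obtain ⟨y, hyS, hy⟩ := hside
    exact step3 hcc hs₀ ht₀ hst₀ hbS haS (Ne.symm hab)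
      (fun z hz hbza => main y z hy hbza hyS hz)
  · exact step3 hcc hs₀ ht₀ hst₀ haS hbS hab
      (fun y hy h => hside ⟨y, hy, h⟩)

end mapmain


/-- For a surjective monotone map `F` between cycle completions with `F(S) ⊆ S'`,
preimages of intervals between cutpoints in the image are intervals between their
(unique) preimages. -/
theorem stmt10 {R R' : Type*} (T : Set (R × R × R)) (T' : Set (R' × R' × R'))
    (S : Set R) (S' : Set R')
    (hcc : IsCycleCompletion T S) (hcc' : IsCycleCompletion T' S')
    (hS : ∃ a ∈ S, ∃ b ∈ S, a ≠ b) (hS' : ∃ a ∈ S', ∃ b ∈ S', a ≠ b)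
    (F : R → R') (hsurj : Function.Surjective F) (hmono : CycMonotone T T' F)
    (hFS : F '' S ⊆ S')
    (v w : R) (hv : F v ∉ S') (hw : F w ∉ S') (hvw : F v ≠ F w) :
    F ⁻¹' (cycOpen T' (F v) (F w)) = cycOpen T v w ∧
      F ⁻¹' (cycInterval T' (F v) (F w)) = cycInterval T v w := by
  have hT := hcc.1
  have hT' := hcc'.1
  have keyv : ∀ x : R, F x = F v → x = v := fun x e =>
    uniquePre hcc hT' hS hS' hsurj hmono hFS e (e ▸ hv)
  have keyw : ∀ x : R, F x = F w → x = w := fun x e =>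
    uniquePre hcc hT' hS hS' hsurj hmono hFS e (e ▸ hw)
  have key : ∀ x : R, (F v, F x, F w) ∈ T' ↔ (v,x,w) ∈ T := by
    intro x
    constructor
    · exact hmono v x w
    · intro h
      have hFxv : F x ≠ F v := fun e => (cne12 hT h).symm (keyv x e)
      have hFxw : F x ≠ F w := fun e => cne23 hT h (keyw x e)
      by_contra hcon
      exact casym hT h (hmono w x v (ctotal hT' hFxv.symm hFxw hvw hcon))
  constructor
  · ext x
    simp only [Set.mem_preimage, cycOpen, Set.mem_setOf_eq]
    exact key x
  · ext x
    simp only [Set.mem_preimage, mem_cycInterval_iff]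
    constructor
    · rintro (h | h | h)
      · exact Or.inl (keyv x h)
      · exact Or.inr (Or.inl (keyw x h))
      · exact Or.inr (Or.inr ((key x).1 h))
    · rintro (rfl | rfl | h)
      · exact Or.inl rfl
      · exact Or.inr (Or.inl rfl)
      · exact Or.inr (Or.inr ((key x).2 h))
end

section
/- Let Z be a cyclic order on a set S, and let L be a cut of Z (a linear order on S inducing Z). Then for every non-trivial interval I of Z there are unique elements v and w of 𝒮(Z) \ S such that I = [v, w] ∩ S in the cyclic order 𝒵(Z); that is, 𝒵(Z) is a cycle completion of Z. -/
/-- `le` is a (reflexive, antisymmetric, transitive, total) linear order relation. -/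
def IsLinRel {S : Type*} (le : S → S → Prop) : Prop :=
  (∀ a, le a a) ∧ (∀ a b, le a b → le b a → a = b) ∧
  (∀ a b c, le a b → le b c → le a c) ∧ (∀ a b, le a b ∨ le b a)

/-- The strict relation associated with `le`. -/
def relLt {S : Type*} (le : S → S → Prop) (a b : S) : Prop := le a b ∧ a ≠ b

/-- The cyclic order induced by a linear order relation. -/
def cycOfLin {S : Type*} (le : S → S → Prop) : Set (S × S × S) :=
  {p | (relLt le p.1 p.2.1 ∧ relLt le p.2.1 p.2.2) ∨
       (relLt le p.2.1 p.2.2 ∧ relLt le p.2.2 p.1) ∨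
       (relLt le p.2.2 p.1 ∧ relLt le p.1 p.2.1)}

/-- `le` is a cut of the cyclic order `Z`: a linear order inducing `Z`. -/
def IsCut {S : Type*} (Z : Set (S × S × S)) (le : S → S → Prop) : Prop :=
  IsLinRel le ∧ cycOfLin le = Z

/-- An initial segment of the relation `le`. -/
def RInitSeg {S : Type*} (le : S → S → Prop) (A : Set S) : Prop :=
  ∀ s ∈ A, ∀ t, le t s → t ∈ A

/-- The ground set `V'(L) = S ∪ (V(L) \ {S})` of the completed linear order,
inside the ambient type `S ⊕ Set S`. -/
def Vprime {S : Type*} (le : S → S → Prop) : Set (S ⊕ Set S) :=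
  Set.range Sum.inl ∪ {x | ∃ A : Set S, RInitSeg le A ∧ A ≠ Set.univ ∧ x = Sum.inr A}

/-- The linear order `D'(L)` interleaving `S` with its initial segments. -/
def Dple {S : Type*} (le : S → S → Prop) : S ⊕ Set S → S ⊕ Set S → Prop
  | Sum.inl x, Sum.inl y => le x y
  | Sum.inr A, Sum.inr B => A ⊆ B
  | Sum.inl x, Sum.inr A => x ∈ A
  | Sum.inr A, Sum.inl x => x ∉ A

/-- The cyclic order `Z(L)` on `V'(L)` induced by `D'(L)`. -/
def ZL {S : Type*} (le : S → S → Prop) :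
    Set ((S ⊕ Set S) × (S ⊕ Set S) × (S ⊕ Set S)) :=
  inducedCycOrder (cycOfLin (Dple le)) (Vprime le)

/-- The map `η_L` sending an element of `S` to itself and an initial segment `A`
to the cut `(L ↾ (S \ A)) ⊕ (L ↾ A)`. -/
def cutEta {S : Type*} (le : S → S → Prop) : S ⊕ Set S → S ⊕ (S → S → Prop)
  | Sum.inl s => Sum.inl s
  | Sum.inr A => Sum.inr (fun x y => (x ∉ A ∧ y ∈ A) ∨ ((x ∈ A ↔ y ∈ A) ∧ le x y))

/-- The cyclic order `𝒵(Z)` on `S ∪ 𝒱`, obtained as the image of `Z(L)` under `η_L`. -/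
def calZ {S : Type*} (le : S → S → Prop) :
    Set ((S ⊕ (S → S → Prop)) × (S ⊕ (S → S → Prop)) × (S ⊕ (S → S → Prop))) :=
  {t | ∃ p ∈ ZL le, t = (cutEta le p.1, cutEta le p.2.1, cutEta le p.2.2)}

/-- The ground set `𝒮(Z) = S ∪ 𝒱`, where `𝒱` is the set of cuts of `Z`. -/
def calS {S : Type*} (Z : Set (S × S × S)) : Set (S ⊕ (S → S → Prop)) :=
  Set.range Sum.inl ∪ {x | ∃ c, IsCut Z c ∧ x = Sum.inr c}

/-! Proper initial segments `A` of `L` parametrise the points of `𝒮(Z) \ S` used by `𝒵(Z)`: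
`η_L` sends `A` to the rotation `(L ↾ (S \ A)) ⊕ (L ↾ A)`, which is again a cut of `Z`, and
different segments give different rotations. In `D'(L)` the points of `S` strictly between two
segments `A` and `B` form `B \ A` if `A ⊆ B` and `(A \ B)ᶜ` if `B ⊂ A`.

Existence: a non-trivial interval `I` of `Z` is `L`-convex or has `L`-convex complement, and an
`L`-convex set `J` whose down-closure `B` is not all of `S` equals `B \ A` with `A = B \ J`.
Uniqueness: a nonempty difference `B \ A` of initial segments determines `A` and `B`, and it is
never the complement of another such difference, since initial segments are comparable. -/

section Completion

variable {S : Type*} {le : S → S → Prop}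

def IsProperInitSeg (le : S → S → Prop) (A : Set S) : Prop :=
  RInitSeg le A ∧ A ≠ Set.univ

def RConvex (le : S → S → Prop) (J : Set S) : Prop :=
  ∀ a ∈ J, ∀ c ∈ J, ∀ b, le a b → le b c → b ∈ J

def rDownClosure (le : S → S → Prop) (J : Set S) : Set S :=
  {x | ∃ s ∈ J, le x s}

def rotateAt (le : S → S → Prop) (A : Set S) : S → S → Prop :=
  fun x y => (x ∉ A ∧ y ∈ A) ∨ ((x ∈ A ↔ y ∈ A) ∧ le x y)

def segOpen (le : S → S → Prop) (A B : Set S) : Set S :=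
  Sum.inl ⁻¹' cycOpen (cycOfLin (Dple le)) (Sum.inr A) (Sum.inr B)

namespace RInitSeg

variable {A B C D : Set S}

theorem le_of_mem_of_notMem (hle : IsLinRel le) (hA : RInitSeg le A) {a b : S}
    (ha : a ∈ A) (hb : b ∉ A) : le a b :=
  (hle.2.2.2 a b).resolve_right fun hba => hb (hA a ha b hba)

theorem subset_or_ssubset (hle : IsLinRel le) (hA : RInitSeg le A) (hB : RInitSeg le B) :
    A ⊆ B ∨ B ⊂ A := by
  refine or_iff_not_imp_left.2 fun hAB => ⟨fun x hxB => ?_, hAB⟩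
  obtain ⟨a, haA, haB⟩ := Set.not_subset.1 hAB
  exact hA a haA x (hB.le_of_mem_of_notMem hle hxB haB)

theorem rConvex (hA : RInitSeg le A) : RConvex le A :=
  fun _ _ c hc b _ hbc => hA c hc b hbc

theorem rDownClosure_subset (hA : RInitSeg le A) : rDownClosure le A ⊆ A :=
  fun x ⟨s, hs, hxs⟩ => hA s hs x hxs

theorem subset_of_diff_eq (hle : IsLinRel le) (hA : RInitSeg le A) (hD : RInitSeg le D)
    (hCD : C ⊆ D) (h : B \ A = D \ C) (hne : (B \ A).Nonempty) : A ⊆ C ∧ B ⊆ D := by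
  obtain ⟨s, hs⟩ := hne
  have hsD : s ∈ D := (h ▸ hs).1
  have hAC : A ⊆ C := fun x hx => by_contra fun hxC =>
    have hxD : x ∈ D := hD s hsD x (hA.le_of_mem_of_notMem hle hx hs.2)
    (h.symm ▸ ⟨hxD, hxC⟩ : x ∈ B \ A).2 hx
  refine ⟨hAC, fun x hx => ?_⟩
  by_cases hxA : x ∈ A
  · exact hCD (hAC hxA)
  · exact (h ▸ ⟨hx, hxA⟩ : x ∈ D \ C).1

theorem eq_of_diff_eq (hle : IsLinRel le) (hA : RInitSeg le A) (hB : RInitSeg le B)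
    (hC : RInitSeg le C) (hD : RInitSeg le D) (hAB : A ⊆ B) (hCD : C ⊆ D)
    (h : B \ A = D \ C) (hne : (B \ A).Nonempty) : A = C ∧ B = D :=
  have ⟨hAC, hBD⟩ := hA.subset_of_diff_eq hle hD hCD h hne
  have ⟨hCA, hDB⟩ := hC.subset_of_diff_eq hle hB hAB h.symm (h ▸ hne)
  ⟨hAC.antisymm hCA, hBD.antisymm hDB⟩

theorem diff_ne_compl_diff (hle : IsLinRel le) (hB : RInitSeg le B) (hC : RInitSeg le C)
    (hBu : B ≠ Set.univ) (hCu : C ≠ Set.univ) : B \ A ≠ (C \ D)ᶜ := by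
  intro h
  obtain ⟨t, ht⟩ := (Set.ne_univ_iff_exists_notMem B).1 hBu
  obtain ⟨z, hz⟩ := (Set.ne_univ_iff_exists_notMem C).1 hCu
  have hzB : z ∈ B := ((Set.ext_iff.1 h z).2 fun hzCD => hz hzCD.1).1
  have htC : t ∈ C := (of_not_not (mt (Set.ext_iff.1 h t).2 fun htBA => ht htBA.1)).1
  rcases hB.subset_or_ssubset hle hC with hBC | hCB
  · exact hz (hBC hzB)
  · exact ht (hCB.1 htC)

end RInitSeg

section Convex

variable {J I : Set S}

theorem subset_rDownClosure (hle : IsLinRel le) (J : Set S) : J ⊆ rDownClosure le J :=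
  fun s hs => ⟨s, hs, hle.1 s⟩

theorem rInitSeg_rDownClosure (hle : IsLinRel le) (J : Set S) :
    RInitSeg le (rDownClosure le J) :=
  fun x ⟨s, hs, hxs⟩ t htx => ⟨s, hs, hle.2.2.1 t x s htx hxs⟩

theorem RConvex.rInitSeg_rDownClosure_diff (hle : IsLinRel le) (hJ : RConvex le J) :
    RInitSeg le (rDownClosure le J \ J) :=
  fun x ⟨⟨s, hs, hxs⟩, hxJ⟩ t htx =>
    ⟨⟨s, hs, hle.2.2.1 t x s htx hxs⟩, fun htJ => hxJ (hJ t htJ s hs x htx hxs)⟩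

theorem RConvex.exists_diff_eq (hle : IsLinRel le) (hJ : RConvex le J) (hne : J.Nonempty)
    (hdown : rDownClosure le J ≠ Set.univ) :
    ∃ A B, IsProperInitSeg le A ∧ IsProperInitSeg le B ∧ A ⊆ B ∧ B \ A = J := by
  obtain ⟨s, hs⟩ := hne
  refine ⟨rDownClosure le J \ J, rDownClosure le J,
    ⟨hJ.rInitSeg_rDownClosure_diff hle, (Set.ne_univ_iff_exists_notMem _).2 ⟨s, fun h => h.2 hs⟩⟩,
    ⟨rInitSeg_rDownClosure hle J, hdown⟩, Set.sdiff_subset, ?_⟩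
  rw [Set.sdiff_sdiff_right_self, Set.inter_eq_right.2 (subset_rDownClosure hle J)]

theorem IsInterval.cycInterval_subset (hI : IsInterval (cycOfLin le) I) {a b c : S}
    (ha : a ∈ I) (hc : c ∈ I) (hb : b ∉ I) (hab : relLt le a b) (hbc : relLt le b c) :
    cycInterval (cycOfLin le) c a ⊆ I :=
  (hI a ha c hc).resolve_left fun h => hb (h (Or.inr (Or.inl ⟨hab, hbc⟩)))

/-- A point `y ∈ I` between `x, z ∉ I` would, with `a` or `c` on the far side of the gap `b`,
force `z` or `x` into `I` by the interval property. -/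
theorem IsInterval.rConvex_compl (hle : IsLinRel le) (hI : IsInterval (cycOfLin le) I)
    {a b c : S} (ha : a ∈ I) (hc : c ∈ I) (hb : b ∉ I) (hab : le a b) (hbc : le b c) :
    RConvex le Iᶜ := by
  obtain ⟨-, hanti, htrans, htot⟩ := hle
  have ne_of_mem {u v : S} (hu : u ∈ I) (hv : v ∉ I) : u ≠ v := fun h => hv (h ▸ hu)
  intro x hx z hz y hxy hyz hy
  rcases htot b y with hby | hyb
  · have hay : relLt le a y :=
      ⟨htrans a b y hab hby, fun h => ne_of_mem ha hb (hanti a b hab (h ▸ hby))⟩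
    exact hz (hI.cycInterval_subset ha hy hb ⟨hab, ne_of_mem ha hb⟩
      ⟨hby, (ne_of_mem hy hb).symm⟩ (Or.inr (Or.inr (Or.inr ⟨hay, hyz, ne_of_mem hy hz⟩))))
  · have hyc : relLt le y c :=
      ⟨htrans y b c hyb hbc, fun h => ne_of_mem hc hb (hanti b c hbc (h ▸ hyb)).symm⟩
    exact hx (hI.cycInterval_subset hy hc hb ⟨hyb, ne_of_mem hy hb⟩
      ⟨hbc, (ne_of_mem hc hb).symm⟩ (Or.inr (Or.inr (Or.inl ⟨⟨hxy, (ne_of_mem hy hx).symm⟩, hyc⟩))))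

theorem IsInterval.rConvex_or_rConvex_compl (hle : IsLinRel le)
    (hI : IsInterval (cycOfLin le) I) (hne : I.Nonempty) :
    (RConvex le I ∧ rDownClosure le I ≠ Set.univ) ∨
      (RConvex le Iᶜ ∧ rDownClosure le Iᶜ ≠ Set.univ) := by
  by_cases hconv : RConvex le I
  · by_cases hdown : rDownClosure le I = Set.univ
    · obtain ⟨s, hs⟩ := hne
      have hIc : RInitSeg le Iᶜ := fun x hx t htx ht =>
        have ⟨u, hu, hxu⟩ : x ∈ rDownClosure le I := hdown ▸ Set.mem_univ x
        hx (hconv t ht u hu x htx hxu)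
      exact Or.inr ⟨hIc.rConvex,
        (Set.ne_univ_iff_exists_notMem _).2 ⟨s, fun h => hIc.rDownClosure_subset h hs⟩⟩
    · exact Or.inl ⟨hconv, hdown⟩
  · obtain ⟨a, ha, c, hc, b, hab, hbc, hb⟩ :
        ∃ a ∈ I, ∃ c ∈ I, ∃ b, le a b ∧ le b c ∧ b ∉ I := by
      simpa [RConvex] using hconv
    have hIc := hI.rConvex_compl hle ha hc hb hab hbc
    exact Or.inr ⟨hIc, (Set.ne_univ_iff_exists_notMem _).2
      ⟨c, fun ⟨j, hj, hcj⟩ => hIc b hb j hj c hbc hcj hc⟩⟩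

theorem IsInterval.exists_diff_eq (hle : IsLinRel le) (hI : IsInterval (cycOfLin le) I)
    (hne : I.Nonempty) (hnu : I ≠ Set.univ) :
    ∃ A B, IsProperInitSeg le A ∧ IsProperInitSeg le B ∧ A ⊆ B ∧ (B \ A = I ∨ B \ A = Iᶜ) := by
  rcases hI.rConvex_or_rConvex_compl hle hne with ⟨hconv, hdown⟩ | ⟨hconv, hdown⟩
  · obtain ⟨A, B, hA, hB, hAB, h⟩ := hconv.exists_diff_eq hle hne hdown
    exact ⟨A, B, hA, hB, hAB, Or.inl h⟩
  · obtain ⟨A, B, hA, hB, hAB, h⟩ := hconv.exists_diff_eq hle (Set.nonempty_compl.2 hnu) hdown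
    exact ⟨A, B, hA, hB, hAB, Or.inr h⟩

end Convex

section SegOpen

variable {A B C D : Set S}

theorem mem_segOpen {s : S} :
    s ∈ segOpen le A B ↔ (s ∉ A ∧ s ∈ B) ∨ (s ∈ B ∧ B ⊂ A) ∨ (B ⊂ A ∧ s ∉ A) := by
  simp [segOpen, cycOpen, cycOfLin, relLt, Dple, Set.ssubset_iff_subset_ne]

theorem segOpen_of_subset (h : A ⊆ B) : segOpen le A B = B \ A := by
  ext s
  simp [mem_segOpen, not_ssubset_of_subset h, and_comm]

theorem segOpen_of_ssubset (h : A ⊂ B) : segOpen le B A = (B \ A)ᶜ := by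
  ext s
  simp [mem_segOpen, h]
  tauto

theorem IsInterval.exists_segOpen_eq (hle : IsLinRel le) {I : Set S}
    (hI : IsInterval (cycOfLin le) I) (hne : I.Nonempty) (hnu : I ≠ Set.univ) :
    ∃ A B, IsProperInitSeg le A ∧ IsProperInitSeg le B ∧ segOpen le A B = I := by
  obtain ⟨A, B, hA, hB, hAB, h | h⟩ := hI.exists_diff_eq hle hne hnu
  · exact ⟨A, B, hA, hB, h ▸ segOpen_of_subset hAB⟩
  · have hAB' : A ⊂ B := Set.ssubset_iff_subset_ne.2 ⟨hAB, by
      rintro rfl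
      exact (Set.nonempty_compl.2 hnu).ne_empty (by rw [← h, sdiff_self, Set.bot_eq_empty])⟩
    exact ⟨B, A, hB, hA, by rw [segOpen_of_ssubset hAB', h, compl_compl]⟩

theorem eq_of_segOpen_eq (hle : IsLinRel le) (hA : IsProperInitSeg le A)
    (hB : IsProperInitSeg le B) (hC : IsProperInitSeg le C) (hD : IsProperInitSeg le D)
    (h : segOpen le A B = segOpen le C D) (hne : (segOpen le A B).Nonempty) :
    A = C ∧ B = D := by
  rcases hA.1.subset_or_ssubset hle hB.1 with hAB | hBA <;>
    rcases hC.1.subset_or_ssubset hle hD.1 with hCD | hDC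
  · rw [segOpen_of_subset hAB, segOpen_of_subset hCD] at h
    rw [segOpen_of_subset hAB] at hne
    exact hA.1.eq_of_diff_eq hle hB.1 hC.1 hD.1 hAB hCD h hne
  · rw [segOpen_of_subset hAB, segOpen_of_ssubset hDC] at h
    exact (hB.1.diff_ne_compl_diff hle hC.1 hB.2 hC.2 h).elim
  · rw [segOpen_of_ssubset hBA, segOpen_of_subset hCD] at h
    exact (hD.1.diff_ne_compl_diff hle hA.1 hD.2 hA.2 h.symm).elim
  · rw [segOpen_of_ssubset hBA, segOpen_of_ssubset hDC, compl_inj_iff] at h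
    have ⟨hBD, hAC⟩ := hB.1.eq_of_diff_eq hle hA.1 hD.1 hC.1 hBA.1 hDC.1 h
      (Set.sdiff_nonempty.2 hBA.2)
    exact ⟨hAC, hBD⟩

end SegOpen

section Rotation

variable {A B : Set S}

theorem IsLinRel.rotateAt (hle : IsLinRel le) (A : Set S) : IsLinRel (rotateAt le A) := by
  obtain ⟨hrefl, hanti, htrans, htot⟩ := hle
  refine ⟨fun a => Or.inr ⟨Iff.rfl, hrefl a⟩, ?_, ?_, fun a b => ?_⟩
  · rintro a b (⟨ha, hb⟩ | ⟨hab, hab'⟩) (⟨hb', ha'⟩ | ⟨hba, hba'⟩)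
    · exact absurd hb hb'
    · exact absurd (hba.1 hb) ha
    · exact absurd (hab.1 ha') hb'
    · exact hanti a b hab' hba'
  · rintro a b c (⟨ha, hb⟩ | ⟨hab, h1⟩) (⟨hb', hc⟩ | ⟨hbc, h2⟩)
    · exact absurd hb hb'
    · exact Or.inl ⟨ha, hbc.1 hb⟩
    · exact Or.inl ⟨fun h => hb' (hab.1 h), hc⟩
    · exact Or.inr ⟨hab.trans hbc, htrans a b c h1 h2⟩
  by_cases ha : a ∈ A <;> by_cases hb : b ∈ A
  · exact (htot a b).imp (fun h => Or.inr ⟨iff_of_true ha hb, h⟩)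
      (fun h => Or.inr ⟨iff_of_true hb ha, h⟩)
  · exact Or.inr (Or.inl ⟨hb, ha⟩)
  · exact Or.inl (Or.inl ⟨ha, hb⟩)
  · exact (htot a b).imp (fun h => Or.inr ⟨iff_of_false ha hb, h⟩)
      (fun h => Or.inr ⟨iff_of_false hb ha, h⟩)

theorem rInitSeg_rotateAt_compl (le : S → S → Prop) (A : Set S) :
    RInitSeg (rotateAt le A) Aᶜ := by
  rintro s hs t (⟨-, hsA⟩ | ⟨hts, -⟩) htA
  · exact hs hsA
  · exact hs (hts.1 htA)

theorem RInitSeg.rotateAt_rotateAt_compl (hle : IsLinRel le) (hA : RInitSeg le A) :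
    rotateAt (rotateAt le A) Aᶜ = le := by
  funext x y
  apply propext
  constructor
  · rintro (⟨hx, hy⟩ | ⟨hm, ⟨hx, hy⟩ | ⟨-, h⟩⟩)
    · exact hA.le_of_mem_of_notMem hle (not_not.1 hx) hy
    · exact absurd (hm.1 hx) (not_not.2 hy)
    · exact h
  · intro h
    by_cases hx : x ∈ A <;> by_cases hy : y ∈ A
    · exact Or.inr ⟨by simp [hx, hy], Or.inr ⟨by simp [hx, hy], h⟩⟩
    · exact Or.inl ⟨not_not.2 hx, hy⟩
    · exact absurd (hA y hy x h) hx
    · exact Or.inr ⟨by simp [hx, hy], Or.inr ⟨by simp [hx, hy], h⟩⟩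

theorem mem_cycOfLin_rotate {a b c : S} :
    (a, b, c) ∈ cycOfLin le ↔ (b, c, a) ∈ cycOfLin le := by
  simp only [cycOfLin, Set.mem_ofPred_eq]
  tauto

theorem RInitSeg.cycOfLin_subset_rotateAt (hA : RInitSeg le A) :
    cycOfLin le ⊆ cycOfLin (rotateAt le A) := by
  have same {x y : S} (h : relLt le x y) (hm : x ∈ A ↔ y ∈ A) : relLt (rotateAt le A) x y :=
    ⟨Or.inr ⟨hm, h.1⟩, h.2⟩
  have cross {x y : S} (hx : x ∉ A) (hy : y ∈ A) : relLt (rotateAt le A) x y :=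
    ⟨Or.inl ⟨hx, hy⟩, fun h => hx (h ▸ hy)⟩
  have key {a b c : S} (hab : relLt le a b) (hbc : relLt le b c) :
      (a, b, c) ∈ cycOfLin (rotateAt le A) := by
    by_cases hb : b ∈ A
    · have ha : a ∈ A := hA b hb a hab.1
      by_cases hc : c ∈ A
      · exact Or.inl ⟨same hab (iff_of_true ha hb), same hbc (iff_of_true hb hc)⟩
      · exact Or.inr (Or.inr ⟨cross hc ha, same hab (iff_of_true ha hb)⟩)
    · have hc : c ∉ A := fun hc => hb (hA c hc b hbc.1)
      by_cases ha : a ∈ A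
      · exact Or.inr (Or.inl ⟨same hbc (iff_of_false hb hc), cross hc ha⟩)
      · exact Or.inl ⟨same hab (iff_of_false ha hb), same hbc (iff_of_false hb hc)⟩
  rintro ⟨a, b, c⟩ (⟨h1, h2⟩ | ⟨h1, h2⟩ | ⟨h1, h2⟩)
  · exact key h1 h2
  · exact mem_cycOfLin_rotate.2 (key h1 h2)
  · exact mem_cycOfLin_rotate.1 (key h1 h2)

/-- Rotating back at `Aᶜ` recovers `L`, which gives the reverse inclusion. -/
theorem RInitSeg.cycOfLin_rotateAt (hle : IsLinRel le) (hA : RInitSeg le A) :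
    cycOfLin (rotateAt le A) = cycOfLin le := by
  refine subset_antisymm ?_ hA.cycOfLin_subset_rotateAt
  have h := (rInitSeg_rotateAt_compl le A).cycOfLin_subset_rotateAt
  rwa [hA.rotateAt_rotateAt_compl hle] at h

theorem IsProperInitSeg.subset_of_rotateAt_eq (hA : IsProperInitSeg le A)
    (h : rotateAt le A = rotateAt le B) : A ⊆ B := by
  obtain ⟨t, ht⟩ := (Set.ne_univ_iff_exists_notMem A).1 hA.2
  intro s hs
  rcases (h ▸ Or.inl ⟨ht, hs⟩ : rotateAt le B t s) with ⟨-, hsB⟩ | ⟨-, hts⟩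
  · exact hsB
  · exact absurd (hA.1 s hs t hts) ht

theorem IsProperInitSeg.rotateAt_inj (hA : IsProperInitSeg le A) (hB : IsProperInitSeg le B) :
    rotateAt le A = rotateAt le B ↔ A = B :=
  ⟨fun h => (hA.subset_of_rotateAt_eq h).antisymm (hB.subset_of_rotateAt_eq h.symm),
    congrArg _⟩

end Rotation

section Eta

variable {A B : Set S}

theorem cutEta_inr (le : S → S → Prop) (A : Set S) :
    cutEta le (Sum.inr A) = Sum.inr (rotateAt le A) := rfl

theorem cutEta_inr_notMem_range : cutEta le (Sum.inr A) ∉ Set.range Sum.inl := by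
  rintro ⟨s, h⟩
  cases h

theorem RInitSeg.cutEta_inr_mem_calS (hle : IsLinRel le) (hA : RInitSeg le A) :
    cutEta le (Sum.inr A) ∈ calS (cycOfLin le) :=
  Or.inr ⟨rotateAt le A, ⟨hle.rotateAt A, hA.cycOfLin_rotateAt hle⟩, rfl⟩

theorem inr_mem_Vprime : Sum.inr A ∈ Vprime le ↔ IsProperInitSeg le A := by
  simp [Vprime, IsProperInitSeg]

theorem cutEta_injOn : Set.InjOn (cutEta le) (Vprime le) := by
  rintro (s | A) hA (t | B) hB h
  · exact congrArg _ (Sum.inl_injective h)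
  · cases h
  · cases h
  · rw [cutEta_inr, cutEta_inr, Sum.inr_injective.eq_iff,
      (inr_mem_Vprime.1 hA).rotateAt_inj (inr_mem_Vprime.1 hB)] at h
    rw [h]

theorem cutEta_mem_calZ_iff {p q r : S ⊕ Set S} (hp : p ∈ Vprime le) (hq : q ∈ Vprime le)
    (hr : r ∈ Vprime le) :
    (cutEta le p, cutEta le q, cutEta le r) ∈ calZ le ↔ (p, q, r) ∈ ZL le := by
  refine ⟨?_, fun h => ⟨_, h, rfl⟩⟩
  rintro ⟨⟨p', q', r'⟩, hZL, he⟩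
  obtain ⟨-, hp', hq', hr'⟩ := id hZL
  simp only [Prod.mk.injEq] at he
  rwa [cutEta_injOn hp hp' he.1, cutEta_injOn hq hq' he.2.1, cutEta_injOn hr hr' he.2.2]

theorem cycInterval_calZ_inter_range (hA : IsProperInitSeg le A) (hB : IsProperInitSeg le B) :
    cycInterval (calZ le) (cutEta le (Sum.inr A)) (cutEta le (Sum.inr B)) ∩
      Set.range Sum.inl = Sum.inl '' segOpen le A B := by
  have hVA := inr_mem_Vprime.2 hA
  have hVB := inr_mem_Vprime.2 hB
  ext x
  constructor
  · rintro ⟨(h | h) | h, s, rfl⟩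
    · cases h
    · cases h
    · exact ⟨s, ((cutEta_mem_calZ_iff hVA (Or.inl ⟨s, rfl⟩) hVB).1 h).1, rfl⟩
  · rintro ⟨s, hs, rfl⟩
    exact ⟨Or.inr ((cutEta_mem_calZ_iff hVA (Or.inl ⟨s, rfl⟩) hVB).2
      ⟨hs, hVA, Or.inl ⟨s, rfl⟩, hVB⟩), s, rfl⟩

theorem exists_eq_cutEta_of_mem_cycInterval {v w : S ⊕ (S → S → Prop)} {s : S}
    (h : Sum.inl s ∈ cycInterval (calZ le) v w) (hv : v ∉ Set.range Sum.inl)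
    (hw : w ∉ Set.range Sum.inl) :
    ∃ A B, IsProperInitSeg le A ∧ IsProperInitSeg le B ∧
      v = cutEta le (Sum.inr A) ∧ w = cutEta le (Sum.inr B) := by
  rcases h with (h | h) | ⟨⟨p, q, r⟩, ⟨-, hp, -, hr⟩, he⟩
  · exact absurd ⟨s, h⟩ hv
  · exact absurd ⟨s, h⟩ hw
  simp only [Prod.mk.injEq] at he
  obtain ⟨rfl, -, rfl⟩ := he
  rcases p with t | A
  · exact absurd ⟨t, rfl⟩ hv
  rcases r with t | B
  · exact absurd ⟨t, rfl⟩ hw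
  exact ⟨A, B, inr_mem_Vprime.1 hp, inr_mem_Vprime.1 hr, rfl, rfl⟩

end Eta

end Completion

theorem stmt11_general {S : Type*} (Z : Set (S × S × S))
    (le : S → S → Prop) (hL : IsCut Z le)
    (I : Set S) (hI : IsInterval Z I) (hne : I.Nonempty) (hnu : I ≠ Set.univ) :
    ∃! vw : (S ⊕ (S → S → Prop)) × (S ⊕ (S → S → Prop)),
      vw.1 ∈ calS Z ∧ vw.1 ∉ Set.range Sum.inl ∧
      vw.2 ∈ calS Z ∧ vw.2 ∉ Set.range Sum.inl ∧
      cycInterval (calZ le) vw.1 vw.2 ∩ Set.range Sum.inl = Sum.inl '' I := by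
  obtain ⟨hle, rfl⟩ := hL
  obtain ⟨A, B, hA, hB, hAB⟩ := hI.exists_segOpen_eq hle hne hnu
  refine ⟨(cutEta le (Sum.inr A), cutEta le (Sum.inr B)),
    ⟨hA.1.cutEta_inr_mem_calS hle, cutEta_inr_notMem_range, hB.1.cutEta_inr_mem_calS hle,
      cutEta_inr_notMem_range, by rw [cycInterval_calZ_inter_range hA hB, hAB]⟩, ?_⟩
  rintro ⟨v, w⟩ ⟨-, hv, -, hw, hvw⟩
  obtain ⟨s, hs⟩ := hne
  obtain ⟨A', B', hA', hB', rfl, rfl⟩ :=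
    exists_eq_cutEta_of_mem_cycInterval (hvw.superset (Set.mem_image_of_mem _ hs)).1 hv hw
  rw [cycInterval_calZ_inter_range hA' hB', Set.image_injective.2 Sum.inl_injective |>.eq_iff]
    at hvw
  obtain ⟨rfl, rfl⟩ := eq_of_segOpen_eq hle hA' hB' hA hB (hvw.trans hAB.symm) (hvw ▸ ⟨s, hs⟩)
  rfl

/-- `𝒵(Z)` is a cycle completion of `Z`: every non-trivial interval `I` of `Z` is
`[v,w] ∩ S` for unique cutpoints `v, w ∈ 𝒮(Z) \ S`. -/
theorem stmt11 {S : Type*} (Z : Set (S × S × S)) (hZ : IsCyclicOrder Z)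
    (le : S → S → Prop) (hL : IsCut Z le)
    (I : Set S) (hI : IsInterval Z I) (hne : I.Nonempty) (hnu : I ≠ Set.univ) :
    ∃! vw : (S ⊕ (S → S → Prop)) × (S ⊕ (S → S → Prop)),
      vw.1 ∈ calS Z ∧ vw.1 ∉ Set.range Sum.inl ∧
      vw.2 ∈ calS Z ∧ vw.2 ∉ Set.range Sum.inl ∧
      cycInterval (calZ le) vw.1 vw.2 ∩ Set.range Sum.inl = Sum.inl '' I :=
  stmt11_general Z le hL I hI hne hnu
end

section
/- In a k-pseudoflower (P_z)_{z ∈ C(I)}, for every vertex x ∈ ⋃_{v ∈ C(I) \ I} P_v, the set {w ∈ C(I) : x ∈ P_w} is an interval of C(I). -/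
/-- A universe of vertex separations on ground set `V`. -/
def IsUniverse {V : Type*} (U : Set (Set V × Set V)) : Prop :=
  (∀ p ∈ U, p.1 ∪ p.2 = Set.univ) ∧
  (∀ p ∈ U, ∀ q ∈ U, (p.1 ∩ q.1, p.2 ∪ q.2) ∈ U) ∧
  (∀ p ∈ U, ∀ q ∈ U, (p.1 ∪ q.1, p.2 ∩ q.2) ∈ U) ∧
  (∀ p ∈ U, (p.2, p.1) ∈ U)

/-- `s` is the successor of `a` in the cyclic order `T`. -/
def IsCycSucc {C0 : Type*} (T : Set (C0 × C0 × C0)) (a s : C0) : Prop :=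
  s ≠ a ∧ ∀ b, b ≠ a → b ≠ s → b ∉ cycInterval T a s

/-- `p` is the predecessor of `a` in the cyclic order `T`. -/
def IsCycPred {C0 : Type*} (T : Set (C0 × C0 × C0)) (p a : C0) : Prop :=
  p ≠ a ∧ ∀ b, b ≠ a → b ≠ p → b ∉ cycInterval T p a

/-- The set `X` of vertices lying in no petal or gluing set. -/
def flowerX {V C0 : Type*} (P : C0 → Set V) : Set V := {x | ∀ z, x ∉ P z}

/-- The interval set `V(v,w) = X ∪ ⋃_{z ∈ [v,w]} P_z`. -/
def intervalSet {V C0 : Type*} (T : Set (C0 × C0 × C0)) (P : C0 → Set V)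
    (v w : C0) : Set V :=
  flowerX P ∪ ⋃ z ∈ cycInterval T v w, P z

/-- `(P_z)_{z ∈ C(I)}` is a `k`-pseudoflower (in the universe `U` of vertex
separations): here the ambient type `C0` plays the role of the cycle completion
`C(I)` of the index set `I0`, whose elements not in `I0` are the cutpoints. -/
def IsPseudoflower {V C0 : Type*} (U : Set (Set V × Set V)) (k : ℕ)
    (T : Set (C0 × C0 × C0)) (I0 : Set C0) (P : C0 → Set V) : Prop :=
  (∀ v ∉ I0, (P v).ncard = (k - (flowerX P).ncard) / 2) ∧
  (∀ v ∉ I0, ∀ w ∉ I0, v ≠ w →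
    (intervalSet T P v w, intervalSet T P w v) ∈ U ∧
    (intervalSet T P v w ∩ intervalSet T P w v).Finite ∧
    (intervalSet T P v w ∩ intervalSet T P w v).ncard ≤ k ∧
    intervalSet T P v w ∩ intervalSet T P w v = P v ∪ P w ∪ flowerX P) ∧
  (∀ i ∈ I0, ∀ p, IsCycPred T p i → P p ⊆ P i) ∧
  (∀ i ∈ I0, ∀ s, IsCycSucc T i s → P s ⊆ P i) ∧
  (∀ i ∈ I0, ∀ i' ∈ I0,
    (P i).ncard = (k - (flowerX P).ncard) / 2 → P i = P i' → i = i')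

lemma cyc_ne_mid {S : Type*} {Z : Set (S × S × S)} (hZ : IsCyclicOrder Z)
    {a b : S} (h : (a, b, a) ∈ Z) : False := hZ.2.1 a b a h h

lemma cyc_ne_left {S : Type*} {Z : Set (S × S × S)} (hZ : IsCyclicOrder Z)
    {a b : S} (h : (a, a, b) ∈ Z) : False := cyc_ne_mid hZ (hZ.1 _ _ _ h)

lemma cyc_ne_right {S : Type*} {Z : Set (S × S × S)} (hZ : IsCyclicOrder Z)
    {a b : S} (h : (a, b, b) ∈ Z) : False := cyc_ne_mid hZ (hZ.1 _ _ _ (hZ.1 _ _ _ h))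

lemma cyc_distinct {S : Type*} {Z : Set (S × S × S)} (hZ : IsCyclicOrder Z)
    {a b c : S} (h : (a, b, c) ∈ Z) : a ≠ b ∧ b ≠ c ∧ a ≠ c := by
  refine ⟨?_, ?_, ?_⟩ <;> rintro rfl
  · exact cyc_ne_left hZ h
  · exact cyc_ne_right hZ h
  · exact cyc_ne_mid hZ h

/-- each `i ∈ I0` has a predecessor outside `I0` in the cycle completion. -/
lemma exists_cut_pred {C0 : Type*} {T : Set (C0 × C0 × C0)} {I0 : Set C0}
    (hT : IsCycleCompletion T I0) (h2 : ∃ a ∈ I0, ∃ b ∈ I0, a ≠ b)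
    {i : C0} (hi : i ∈ I0) : ∃ v ∉ I0, IsCycPred T v i := by
  obtain ⟨hZ, hcomp⟩ := hT
  have hne : ({i} : Set C0) ≠ I0 := by
    obtain ⟨a, ha, b, hb, hab⟩ := h2
    intro h
    rcases eq_or_ne a i with rfl | hai
    · exact hab (by rw [← h] at hb; exact (hb.symm))
    · exact hai (by rw [← h] at ha; exact ha)
  have hint : IsInterval (inducedCycOrder T I0) ({i} : Set C0) := by
    rintro s rfl t rfl
    left
    rintro c (hc | hc)
    · rcases hc with rfl | rfl <;> rfl
    · exact absurd hc.1 (fun h => cyc_ne_mid hZ h)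
  obtain ⟨⟨v, w⟩, ⟨hv, hw, heq⟩, huniq⟩ :=
    hcomp {i} (Set.singleton_subset_iff.mpr hi) hint ⟨i, rfl⟩ hne
  have hivw : (v, i, w) ∈ T := by
    have : i ∈ cycInterval T v w ∩ I0 := by rw [heq]; exact rfl
    rcases this.1 with (h | h) | h
    · exact absurd hi (h ▸ hv)
    · exact absurd hi (h ▸ hw)
    · exact h
  refine ⟨v, hv, fun h => hv (h ▸ hi), fun b hbi hbv hb => ?_⟩
  rcases hb with (h | h) | hvbi
  · exact hbv h
  · exact hbi h
  have hvbw : (v, b, w) ∈ T := hZ.2.2.2 _ _ _ _ hvbi hivw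
  have hbI : b ∉ I0 := by
    intro hbI0
    have : b ∈ cycInterval T v w ∩ I0 := ⟨Or.inr hvbw, hbI0⟩
    rw [heq] at this
    exact hbi this
  -- (b, i, w) ∈ T
  have hbiw : (b, i, w) ∈ T := by
    have h1 : (i, v, b) ∈ T := hZ.1 _ _ _ (hZ.1 _ _ _ hvbi)
    have h2 : (i, w, v) ∈ T := hZ.1 _ _ _ hivw
    have h3 : (i, w, b) ∈ T := hZ.2.2.2 _ _ _ _ h2 h1
    exact hZ.1 _ _ _ (hZ.1 _ _ _ h3)
  -- [b,w] ∩ I0 = {i}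
  have heq2 : cycInterval T b w ∩ I0 = {i} := by
    apply Set.eq_singleton_iff_unique_mem.mpr
    refine ⟨⟨Or.inr hbiw, hi⟩, ?_⟩
    rintro c ⟨(hc | hc) | hc, hcI⟩
    · exact absurd hcI (hc ▸ hbI)
    · exact absurd hcI (hc ▸ hw)
    · have hcw : (b, c, w) ∈ T := hc
      have h1 : (w, v, b) ∈ T := hZ.1 _ _ _ (hZ.1 _ _ _ hvbw)
      have h2 : (w, b, c) ∈ T := hZ.1 _ _ _ (hZ.1 _ _ _ hcw)
      have h3 : (w, v, c) ∈ T := hZ.2.2.2 _ _ _ _ h1 h2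
      have hvcw : (v, c, w) ∈ T := hZ.1 _ _ _ h3
      have : c ∈ cycInterval T v w ∩ I0 := ⟨Or.inr hvcw, hcI⟩
      rw [heq] at this
      exact this
  have := huniq (b, w) ⟨hbI, hw, heq2⟩
  exact hbv (congrArg Prod.fst this)

/-- In a `k`-pseudoflower, for every vertex `x` lying in some gluing set `P_v` of a
cutpoint, the set of positions `w ∈ C(I)` with `x ∈ P_w` is an interval of `C(I)`. -/
theorem stmt18 {V C0 : Type*} (U : Set (Set V × Set V)) (hU : IsUniverse U) (k : ℕ)
    (T : Set (C0 × C0 × C0)) (I0 : Set C0)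
    (hT : IsCycleCompletion T I0) (h2 : ∃ a ∈ I0, ∃ b ∈ I0, a ≠ b)
    (P : C0 → Set V) (hP : IsPseudoflower U k T I0 P)
    (x : V) (hx : ∃ v ∉ I0, x ∈ P v) :
    IsInterval T {w : C0 | x ∈ P w} := by
  obtain ⟨hZ, hcomp⟩ := id hT
  obtain ⟨v0, hv0, hxv0⟩ := hx
  have hnotX : x ∉ flowerX P := fun h => h v0 hxv0
  -- key refinement lemma: replace a bad position by a bad cutpoint
  have key : ∀ s a t : C0, x ∈ P s → x ∉ P a → (s, a, t) ∈ T →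
      ∃ a' ∉ I0, (s, a', t) ∈ T ∧ x ∉ P a' := by
    intro s a t hxs hxa hsat
    by_cases haI : a ∈ I0
    · obtain ⟨v, hvI, hvpred⟩ := exists_cut_pred hT h2 haI
      have hPsub : P v ⊆ P a := hP.2.2.1 a haI v hvpred
      have hxv : x ∉ P v := fun h => hxa (hPsub h)
      have hvs : v ≠ s := by rintro rfl; exact hxv hxs
      have hsa : s ≠ a := (cyc_distinct hZ hsat).1
      have hsva : (s, v, a) ∈ T := by
        by_contra h
        have : (a, v, s) ∈ T := hZ.2.2.1 s v a hvs.symm hvpred.1 hsa h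
        have hvsa : (v, s, a) ∈ T := hZ.1 _ _ _ this
        exact hvpred.2 s hsa hvs.symm (Or.inr hvsa)
      exact ⟨v, hvI, hZ.2.2.2 _ _ _ _ hsva hsat, hxv⟩
    · exact ⟨a, haI, hsat, hxa⟩
  intro s hs t ht
  by_contra hcon
  push_neg at hcon
  obtain ⟨hns, hnt⟩ := hcon
  rw [Set.not_subset] at hns hnt
  obtain ⟨a, haint, hxa⟩ := hns
  obtain ⟨c, hcint, hxc⟩ := hnt
  have hxs : x ∈ P s := hs
  have hxt : x ∈ P t := ht
  have hsat : (s, a, t) ∈ T := by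
    rcases haint with (h | h) | h
    · exact absurd (h ▸ hxs) hxa
    · exact absurd (h ▸ hxt) hxa
    · exact h
  have htcs : (t, c, s) ∈ T := by
    rcases hcint with (h | h) | h
    · exact absurd (h ▸ hxt) hxc
    · exact absurd (h ▸ hxs) hxc
    · exact h
  obtain ⟨a', ha'I, hsat', hxa'⟩ := key s a t hxs hxa hsat
  obtain ⟨c', hc'I, htcs', hxc'⟩ := key t c s hxt hxc htcs
  have hac : a' ≠ c' := by
    rintro rfl
    exact hZ.2.1 _ _ _ hsat' htcs'
  -- derive (c', s, a') and (a', t, c')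
  have hcsa : (c', s, a') ∈ T := by
    have h1 : (s, t, c') ∈ T := hZ.1 _ _ _ (hZ.1 _ _ _ htcs')
    have h2 : (s, a', c') ∈ T := hZ.2.2.2 _ _ _ _ hsat' h1
    exact hZ.1 _ _ _ (hZ.1 _ _ _ h2)
  have hatc : (a', t, c') ∈ T := by
    have h1 : (t, s, a') ∈ T := hZ.1 _ _ _ (hZ.1 _ _ _ hsat')
    have h2 : (t, c', a') ∈ T := hZ.2.2.2 _ _ _ _ htcs' h1
    exact hZ.1 _ _ _ (hZ.1 _ _ _ h2)
  obtain ⟨-, -, -, hsep⟩ := hP.2.1 a' ha'I c' hc'I hac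
  have hx1 : x ∈ intervalSet T P a' c' := by
    right
    exact Set.mem_biUnion (Or.inr hatc : t ∈ cycInterval T a' c') hxt
  have hx2 : x ∈ intervalSet T P c' a' := by
    right
    exact Set.mem_biUnion (Or.inr hcsa : s ∈ cycInterval T c' a') hxs
  have : x ∈ P a' ∪ P c' ∪ flowerX P := hsep ▸ ⟨hx1, hx2⟩
  rcases this with (h | h) | h
  · exact hxa' h
  · exact hxc' h
  · exact hnotX h
end
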